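/- arXiv:1103.2695 — 12 statements merged into one kernel-verified Lean document; each statement's English description precedes it below -/
import Mathlib

section
/- The D-type test function f is continuously differentiable on ℝ^N. That is, under the stated hypotheses (pairwise disjoint balls S_i not containing T), the function f defined by f(x) = C_i(x) for x ∈ S_i (i = 2,…,m) and f(x) = g(x) otherwise is of class C¹ on all of ℝ^N. -/
/-!
On the ball `S_i` the cubic modification exceeds the paraboloid by
`(‖x - M_i‖ - ρ_i)² (2⟪x - M_i, T - M_i⟫ - A_i (2‖x - M_i‖ / ρ_i + 1)) / ρ_i²`, so, the balls being
disjoint, `f = g + ∑ᵢ 1_{S_i} (C_i - g)`. Each correction vanishes together with its derivative on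
the sphere `B_i`, so cutting it off by the indicator of `S_i` keeps it `C¹`. The correction is `C¹`
at the centre as well: its part odd in `‖x - M_i‖` is `‖x - M_i‖` times a smooth function vanishing
at `M_i`, and such a product is `C¹` with derivative `0` at `M_i`.
-/

open scoped RealInnerProductSpace

open Set Filter Metric Topology Asymptotics

theorem eq_add_sum_indicator {α ι M : Type*} [AddCommMonoid M] {I : Finset ι} {s : ι → Set α}
    (hs : (I : Set ι).PairwiseDisjoint s) {f g : α → M} {φ : ι → α → M}
    (hin : ∀ i ∈ I, ∀ x ∈ s i, f x = g x + φ i x) (hout : ∀ x, (∀ i ∈ I, x ∉ s i) → f x = g x) :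
    f = fun x => g x + ∑ i ∈ I, (s i).indicator (φ i) x := by
  funext x
  by_cases hx : ∃ i ∈ I, x ∈ s i
  · obtain ⟨i, hi, hxi⟩ := hx
    rw [hin i hi x hxi, Finset.sum_eq_single_of_mem i hi fun j hj hji =>
      indicator_of_notMem (disjoint_left.1 (hs hi hj hji.symm) hxi) _, indicator_of_mem hxi]
  · simp only [not_exists, not_and] at hx
    rw [hout x hx, Finset.sum_eq_zero fun i hi => indicator_of_notMem (hx i hi) _, add_zero]

section NormedSpace

variable {E F : Type*} [NormedAddCommGroup E] [NormedSpace ℝ E]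
  [NormedAddCommGroup F] [NormedSpace ℝ F] {s : Set E} {φ : E → F} {φ' : E → E →L[ℝ] F}

theorem hasFDerivAt_indicator (hφ : ∀ x, HasFDerivAt φ (φ' x) x)
    (h0 : ∀ x ∈ frontier s, φ x = 0) (h1 : ∀ x ∈ frontier s, φ' x = 0) (x : E) :
    HasFDerivAt (s.indicator φ) (s.indicator φ' x) x := by
  by_cases hx : x ∈ frontier s
  · have hφx := hφ x
    rw [h1 x hx, hasFDerivAt_iff_isLittleO] at hφx
    rw [indicator_apply_eq_zero.2 fun _ => h1 x hx, hasFDerivAt_iff_isLittleO]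
    refine (isBigO_of_le _ fun y => ?_).trans_isLittleO hφx
    simpa [h0 x hx, indicator_apply_eq_zero.2 fun _ => h0 x hx]
      using norm_indicator_le_norm_self φ y
  rw [← mem_compl_iff, compl_frontier_eq_union_interior] at hx
  rcases hx with hx | hx
  · rw [indicator_of_mem (interior_subset hx)]
    exact (hφ x).congr_of_eventuallyEq <| eventuallyEq_of_mem (isOpen_interior.mem_nhds hx)
      fun y hy => indicator_of_mem (interior_subset hy) φ
  · rw [indicator_of_notMem (interior_subset hx)]
    exact (hasFDerivAt_const 0 x).congr_of_eventuallyEq <|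
      eventuallyEq_of_mem (isOpen_interior.mem_nhds hx)
        fun y hy => indicator_of_notMem (interior_subset hy) φ

theorem ContDiff.indicator_of_frontier (hφ : ContDiff ℝ 1 φ)
    (h0 : ∀ x ∈ frontier s, φ x = 0) (h1 : ∀ x ∈ frontier s, fderiv ℝ φ x = 0) :
    ContDiff ℝ 1 (s.indicator φ) :=
  contDiff_one_iff_hasFDerivAt.2 ⟨s.indicator (fderiv ℝ φ),
    (hφ.continuous_fderiv one_ne_zero).indicator h1,
    hasFDerivAt_indicator (fun x => (hφ.differentiable one_ne_zero x).hasFDerivAt) h0 h1⟩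

theorem hasFDerivAt_mul_norm_sub_of_eq_zero {u : E → ℝ} {c : E} (hu : DifferentiableAt ℝ u c)
    (h0 : u c = 0) :
    HasFDerivAt (fun x => u x * ‖x - c‖) (0 : E →L[ℝ] ℝ) c := by
  have hu_bigO : u =O[𝓝 c] fun x => ‖x - c‖ := by
    simpa [h0] using hu.hasFDerivAt.isBigO_sub.norm_right
  have hnorm : (fun x => ‖x - c‖) =o[𝓝 c] fun _ => (1 : ℝ) :=
    (isLittleO_one_iff ℝ).2 (tendsto_norm_sub_self c)
  rw [hasFDerivAt_iff_isLittleO, ← isLittleO_norm_right]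
  simpa [h0] using hu_bigO.mul_isLittleO hnorm

end NormedSpace

section InnerProductSpace

variable {E : Type*} [NormedAddCommGroup E] [InnerProductSpace ℝ E] {u : E → ℝ} {c T x : E}
  {ρ A t v : ℝ}

theorem ContDiff.mul_norm_sub_of_eq_zero (hu : ContDiff ℝ 1 u) (h0 : u c = 0) :
    ContDiff ℝ 1 fun x => u x * ‖x - c‖ := by
  set r : E → ℝ := fun x => ‖x - c‖
  have hr_cont : Continuous r := (continuous_id.sub continuous_const).norm
  have hr_contDiffAt {x : E} (hx : x ≠ c) : ContDiffAt ℝ 1 r x :=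
    (contDiffAt_norm ℝ (sub_ne_zero.2 hx)).comp x (contDiff_id.sub contDiff_const).contDiffAt
  have hr_fderiv_le (x : E) : ‖fderiv ℝ r x‖ ≤ 1 := by
    have hr_lip : LipschitzWith 1 r := by simpa [r, dist_eq_norm] using LipschitzWith.dist_left c
    simpa using norm_fderiv_le_of_lipschitz ℝ hr_lip (x₀ := x)
  set D : E → E →L[ℝ] ℝ := fun x => u x • fderiv ℝ r x + r x • fderiv ℝ u x
  have hDc : D c = 0 := by simp [D, r, h0]
  have hu' := hu.continuous_fderiv one_ne_zero
  refine contDiff_one_iff_hasFDerivAt.2 ⟨D, continuous_iff_continuousAt.2 fun x => ?_, fun x => ?_⟩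
  · rcases eq_or_ne x c with rfl | hx
    · have hD_le (y : E) : ‖D y‖ ≤ |u y| + r y * ‖fderiv ℝ u y‖ := by
        calc ‖D y‖ ≤ |u y| * ‖fderiv ℝ r y‖ + |r y| * ‖fderiv ℝ u y‖ := by
              simpa [norm_smul] using norm_add_le (u y • fderiv ℝ r y) (r y • fderiv ℝ u y)
          _ ≤ |u y| * 1 + r y * ‖fderiv ℝ u y‖ := by
              rw [abs_of_nonneg (norm_nonneg _)]; gcongr; exact hr_fderiv_le y
          _ = _ := by ring
      have hbound : Tendsto (fun y => |u y| + r y * ‖fderiv ℝ u y‖) (𝓝 x) (𝓝 0) := by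
        have hu_cont := hu.continuous
        exact Continuous.tendsto' (by fun_prop) x 0 (by simp [r, h0])
      rw [ContinuousAt, hDc]
      exact squeeze_zero_norm hD_le hbound
    · exact (hu.continuous.continuousAt.smul
        ((hr_contDiffAt hx).continuousAt_fderiv one_ne_zero)).add
          (hr_cont.continuousAt.smul hu'.continuousAt)
  · rcases eq_or_ne x c with rfl | hx
    · rw [hDc]
      exact hasFDerivAt_mul_norm_sub_of_eq_zero (hu.differentiable one_ne_zero x) h0
    · exact (hu.differentiable one_ne_zero x).hasFDerivAt.mul
        ((hr_contDiffAt hx).differentiableAt one_ne_zero).hasFDerivAt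

noncomputable def cubicCorrection (c T : E) (ρ A : ℝ) (x : E) : ℝ :=
  (‖x - c‖ - ρ) ^ 2 * ((2 * ⟪x - c, T - c⟫ - A * (2 * ‖x - c‖ / ρ + 1)) / ρ ^ 2)

theorem cubicCorrection_eq_add_mul_norm_sub (hρ : ρ ≠ 0) (x : E) :
    cubicCorrection c T ρ A x =
      ((‖x - c‖ ^ 2 + ρ ^ 2) * (2 * ⟪x - c, T - c⟫ - A) + 4 * A * ‖x - c‖ ^ 2) / ρ ^ 2
        + -((2 * A / ρ * ‖x - c‖ ^ 2 + 4 * ρ * ⟪x - c, T - c⟫) / ρ ^ 2) * ‖x - c‖ := by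
  unfold cubicCorrection
  field_simp
  ring

theorem contDiff_cubicCorrection (hρ : ρ ≠ 0) : ContDiff ℝ 1 (cubicCorrection c T ρ A) := by
  have hp : ContDiff ℝ 1 fun x : E => ⟪x - c, T - c⟫ :=
    (contDiff_id.sub contDiff_const).inner ℝ contDiff_const
  have hr2 : ContDiff ℝ 1 fun x : E => ‖x - c‖ ^ 2 := (contDiff_id.sub contDiff_const).norm_sq ℝ
  rw [funext (cubicCorrection_eq_add_mul_norm_sub hρ)]
  exact ContDiff.add (by fun_prop) (ContDiff.mul_norm_sub_of_eq_zero (by fun_prop) (by simp))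

theorem cubicCorrection_of_mem_sphere (hx : x ∈ sphere c ρ) : cubicCorrection c T ρ A x = 0 := by
  rw [mem_sphere, dist_eq_norm] at hx
  simp [cubicCorrection, hx]

theorem hasFDerivAt_cubicCorrection_of_mem_sphere (hρ : ρ ≠ 0) (hx : x ∈ sphere c ρ) :
    HasFDerivAt (cubicCorrection c T ρ A) (0 : E →L[ℝ] ℝ) x := by
  rw [mem_sphere, dist_eq_norm] at hx
  have hxc : x - c ≠ 0 := by
    rintro h
    rw [h, norm_zero] at hx
    exact hρ hx.symm
  have hr : DifferentiableAt ℝ (fun y : E => ‖y - c‖) x :=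
    (differentiableAt_id.sub_const c).norm ℝ hxc
  have hp : DifferentiableAt ℝ (fun y : E => ⟪y - c, T - c⟫) x :=
    (differentiableAt_id.sub_const c).inner ℝ (differentiableAt_const _)
  have hq : HasFDerivAt (fun y : E => (‖y - c‖ - ρ) ^ 2) (0 : E →L[ℝ] ℝ) x := by
    simpa [hx] using (hr.sub_const ρ).hasFDerivAt.pow 2
  have hh : DifferentiableAt ℝ
      (fun y : E => (2 * ⟪y - c, T - c⟫ - A * (2 * ‖y - c‖ / ρ + 1)) / ρ ^ 2) x := by
    fun_prop
  exact (hq.mul hh.hasFDerivAt).congr_fderiv (by simp [hx])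

theorem contDiff_indicator_closedBall_cubicCorrection (hρ : ρ ≠ 0) :
    ContDiff ℝ 1 ((closedBall c ρ).indicator (cubicCorrection c T ρ A)) := by
  refine (contDiff_cubicCorrection hρ).indicator_of_frontier ?_ ?_ <;>
    rw [frontier_closedBall c hρ]
  · exact fun x hx => cubicCorrection_of_mem_sphere hx
  · exact fun x hx => (hasFDerivAt_cubicCorrection_of_mem_sphere hρ hx).fderiv

theorem cubic_eq_add_cubicCorrection (hρ : ρ ≠ 0) (hA : A = ‖T - c‖ ^ 2 + t - v) (hx : x ≠ c) :
    (2 / ρ ^ 2 * ⟪x - c, T - c⟫ / ‖x - c‖ - 2 * A / ρ ^ 3) * ‖x - c‖ ^ 3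
        + (1 - 4 / ρ * ⟪x - c, T - c⟫ / ‖x - c‖ + 3 * A / ρ ^ 2) * ‖x - c‖ ^ 2 + v =
      ‖x - T‖ ^ 2 + t + cubicCorrection c T ρ A x := by
  have hr : ‖x - c‖ ≠ 0 := norm_ne_zero_iff.2 (sub_ne_zero.2 hx)
  have hxT : ‖x - T‖ ^ 2 = ‖x - c‖ ^ 2 - 2 * ⟪x - c, T - c⟫ + ‖T - c‖ ^ 2 := by
    rw [← sub_sub_sub_cancel_right x T c, norm_sub_sq_real]
  rw [hxT, cubicCorrection, show ‖T - c‖ ^ 2 = A - t + v by rw [hA]; ring]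
  field_simp
  ring

theorem center_eq_add_cubicCorrection (hρ : ρ ≠ 0) (hA : A = ‖T - c‖ ^ 2 + t - v) :
    v = ‖c - T‖ ^ 2 + t + cubicCorrection c T ρ A c := by
  simp only [cubicCorrection, sub_self, norm_zero, inner_zero_left, norm_sub_rev c T, hA]
  field_simp
  ring

end InnerProductSpace

theorem dtype_contDiff_one_general
    {N : ℕ} (m : ℕ)
    (T : EuclideanSpace ℝ (Fin N)) (t : ℝ)
    (M : ℕ → EuclideanSpace ℝ (Fin N)) (ρ : ℕ → ℝ) (fv : ℕ → ℝ)
    (hρ : ∀ i ∈ Finset.Icc 2 m, 0 < ρ i)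
    (hdisj : ∀ i ∈ Finset.Icc 2 m, ∀ j ∈ Finset.Icc 2 m, i ≠ j →
      Disjoint (Metric.closedBall (M i) (ρ i)) (Metric.closedBall (M j) (ρ j)))
    (A : ℕ → ℝ) (hA : ∀ i ∈ Finset.Icc 2 m, A i = ‖T - M i‖ ^ 2 + t - fv i)
    (C : ℕ → EuclideanSpace ℝ (Fin N) → ℝ)
    (hC : ∀ i ∈ Finset.Icc 2 m, ∀ x, x ≠ M i → C i x =
      (2 / (ρ i) ^ 2 * ⟪x - M i, T - M i⟫ / ‖x - M i‖ - 2 * A i / (ρ i) ^ 3)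
          * ‖x - M i‖ ^ 3
        + (1 - 4 / (ρ i) * ⟪x - M i, T - M i⟫ / ‖x - M i‖ + 3 * A i / (ρ i) ^ 2)
          * ‖x - M i‖ ^ 2
        + fv i)
    (hCM : ∀ i ∈ Finset.Icc 2 m, C i (M i) = fv i)
    (f : EuclideanSpace ℝ (Fin N) → ℝ)
    (hf1 : ∀ i ∈ Finset.Icc 2 m, ∀ x ∈ Metric.closedBall (M i) (ρ i), f x = C i x)
    (hf2 : ∀ x, (∀ i ∈ Finset.Icc 2 m, x ∉ Metric.closedBall (M i) (ρ i)) →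
      f x = ‖x - T‖ ^ 2 + t) :
    ContDiff ℝ 1 f := by
  have hf : f = fun x => ‖x - T‖ ^ 2 + t + ∑ i ∈ Finset.Icc 2 m,
      (closedBall (M i) (ρ i)).indicator (cubicCorrection (M i) T (ρ i) (A i)) x := by
    refine eq_add_sum_indicator (fun i hi j hj hij => hdisj i hi j hj hij) (fun i hi x hx => ?_) hf2
    rw [hf1 i hi x hx]
    rcases eq_or_ne x (M i) with hxM | hxM
    · rw [hxM, hCM i hi]
      exact center_eq_add_cubicCorrection (hρ i hi).ne' (hA i hi)
    · rw [hC i hi x hxM]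
      exact cubic_eq_add_cubicCorrection (hρ i hi).ne' (hA i hi) hxM
  rw [hf]
  exact ((contDiff_id.sub contDiff_const).norm_sq ℝ |>.add contDiff_const).add <|
    ContDiff.sum fun i hi => contDiff_indicator_closedBall_cubicCorrection (hρ i hi).ne'

/-- The D-type test function `f` (equal to the cubic modification `C i`
on each ball `S_i = closedBall (M i) (ρ i)`, `i = 2,…,m`, and to the paraboloid
`g(x) = ‖x - T‖² + t` elsewhere) is continuously differentiable on all of `ℝ^N`,
provided the balls are pairwise disjoint and do not contain `T`. -/
theorem dtype_contDiff_one
    {N : ℕ} (hN : 1 ≤ N) (m : ℕ) (hm : 2 ≤ m)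
    (T : EuclideanSpace ℝ (Fin N)) (t : ℝ)
    (M : ℕ → EuclideanSpace ℝ (Fin N)) (ρ : ℕ → ℝ) (fv : ℕ → ℝ)
    (hρ : ∀ i ∈ Finset.Icc 2 m, 0 < ρ i)
    (hMT : ∀ i ∈ Finset.Icc 2 m, M i ≠ T)
    (hMM : ∀ i ∈ Finset.Icc 2 m, ∀ j ∈ Finset.Icc 2 m, i ≠ j → M i ≠ M j)
    (hdisj : ∀ i ∈ Finset.Icc 2 m, ∀ j ∈ Finset.Icc 2 m, i ≠ j →
      Disjoint (Metric.closedBall (M i) (ρ i)) (Metric.closedBall (M j) (ρ j)))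
    (hT : ∀ i ∈ Finset.Icc 2 m, T ∉ Metric.closedBall (M i) (ρ i))
    (A : ℕ → ℝ) (hA : ∀ i ∈ Finset.Icc 2 m, A i = ‖T - M i‖ ^ 2 + t - fv i)
    (C : ℕ → EuclideanSpace ℝ (Fin N) → ℝ)
    (hC : ∀ i ∈ Finset.Icc 2 m, ∀ x, x ≠ M i → C i x =
      (2 / (ρ i) ^ 2 * ⟪x - M i, T - M i⟫ / ‖x - M i‖ - 2 * A i / (ρ i) ^ 3)
          * ‖x - M i‖ ^ 3
        + (1 - 4 / (ρ i) * ⟪x - M i, T - M i⟫ / ‖x - M i‖ + 3 * A i / (ρ i) ^ 2)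
          * ‖x - M i‖ ^ 2
        + fv i)
    (hCM : ∀ i ∈ Finset.Icc 2 m, C i (M i) = fv i)
    (f : EuclideanSpace ℝ (Fin N) → ℝ)
    (hf1 : ∀ i ∈ Finset.Icc 2 m, ∀ x ∈ Metric.closedBall (M i) (ρ i), f x = C i x)
    (hf2 : ∀ x, (∀ i ∈ Finset.Icc 2 m, x ∉ Metric.closedBall (M i) (ρ i)) →
      f x = ‖x - T‖ ^ 2 + t) :
    ContDiff ℝ 1 f :=
  dtype_contDiff_one_general m T t M ρ fv hρ hdisj A hA C hC hCM f hf1 hf2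
end

section
/- The D2-type test function f is twice continuously differentiable on ℝ^N. That is, under the stated hypotheses (pairwise disjoint balls S_i not containing T, δ > 0), the function f defined by f(x) = Q_i(x) for x ∈ S_i (i = 2,…,m) and f(x) = g(x) otherwise is of class C² on all of ℝ^N. -/
/-!
With `r = ‖x - Mᵢ‖` and `κ = 1 - δ/2`, on the ball `Sᵢ` one has
`Qᵢ - g = -(1 - r/ρᵢ)³ · Wᵢ` with
`Wᵢ = -2 (3r/ρᵢ + 1) ⟪x - Mᵢ, T - Mᵢ⟫ + (6r²/ρᵢ² + 3r/ρᵢ + 1) Aᵢ + κ r²`.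
Replacing `(1 - r/ρᵢ)³` by `max (1 - r/ρᵢ) 0 ^ 3` gives a correction `φᵢ` that vanishes off `Sᵢ`,
so, the balls being disjoint, `f = g + ∑ᵢ φᵢ` on all of `ℝ^N`. Since `s ↦ max s 0 ^ 3` is `C²`,
each `φᵢ` is `C²` away from `Mᵢ`. Near `Mᵢ`, expanding the product kills every term linear in `r`,
leaving a polynomial in `⟪x - Mᵢ, T - Mᵢ⟫` and `r², r³, r⁴, r⁵`. These powers are all `C²`:
`r²` and `r⁴` are smooth, `r⁵ = r³ r²`, and `r³` has gradient `3 r (x - Mᵢ)`, which is `C¹`.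
-/

open scoped RealInnerProductSpace
open Asymptotics Topology

lemma hasFDerivAt_norm_smul_self_zero {E : Type*} [NormedAddCommGroup E] [NormedSpace ℝ E] :
    HasFDerivAt (fun x : E => ‖x‖ • x) (0 : E →L[ℝ] E) 0 := by
  rw [hasFDerivAt_iff_isLittleO_nhds_zero]
  simp only [zero_add, norm_zero, zero_smul, sub_zero, zero_apply]
  have hnorm : (fun x : E => ‖x‖) =o[𝓝 0] fun _ => (1 : ℝ) :=
    (isLittleO_one_iff ℝ).2 (by simpa using continuous_norm.tendsto (0 : E))
  simpa using hnorm.smul_isBigO (isBigO_refl (fun x : E => x) _)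

section InnerProductSpace

variable {E : Type*} [NormedAddCommGroup E] [InnerProductSpace ℝ E]

lemma norm_fderiv_norm_smul_self_le (x : E) :
    ‖fderiv ℝ (fun y : E => ‖y‖ • y) x‖ ≤ 2 * ‖x‖ := by
  rcases eq_or_ne x 0 with rfl | hx
  · simp [hasFDerivAt_norm_smul_self_zero.fderiv]
  have hnorm : HasFDerivAt (‖·‖) (fderiv ℝ (‖·‖) x) x :=
    ((contDiffAt_norm ℝ hx).differentiableAt (n := 1) (by norm_num)).hasFDerivAt
  have hnorm_le : ‖fderiv ℝ (‖·‖) x‖ ≤ 1 := by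
    simpa using norm_fderiv_le_of_lipschitz ℝ (x₀ := x) lipschitzWith_one_norm
  have hderiv : HasFDerivAt (fun y : E => ‖y‖ • y)
      (‖x‖ • ContinuousLinearMap.id ℝ E + (fderiv ℝ (‖·‖) x).smulRight x) x :=
    hnorm.smul (hasFDerivAt_id x)
  rw [hderiv.fderiv]
  calc _ ≤ ‖‖x‖ • ContinuousLinearMap.id ℝ E‖ + ‖(fderiv ℝ (‖·‖) x).smulRight x‖ :=
        norm_add_le _ _
    _ ≤ ‖x‖ * ‖ContinuousLinearMap.id ℝ E‖ + ‖fderiv ℝ (‖·‖) x‖ * ‖x‖ := by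
        rw [ContinuousLinearMap.norm_smulRight_apply, norm_smul, norm_norm]
    _ ≤ ‖x‖ * 1 + 1 * ‖x‖ := by gcongr; exact ContinuousLinearMap.norm_id_le
    _ = 2 * ‖x‖ := by ring

lemma contDiff_norm_smul_self : ContDiff ℝ 1 (fun x : E => ‖x‖ • x) := by
  have hsmooth : ∀ x : E, x ≠ 0 → ContDiffAt ℝ 2 (fun y : E => ‖y‖ • y) x :=
    fun x hx => (contDiffAt_norm ℝ hx).smul contDiffAt_id
  rw [contDiff_one_iff_fderiv]
  constructor
  · intro x
    rcases eq_or_ne x 0 with rfl | hx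
    · exact hasFDerivAt_norm_smul_self_zero.differentiableAt
    · exact (hsmooth x hx).differentiableAt (by norm_num)
  · rw [continuous_iff_continuousAt]
    intro x
    rcases eq_or_ne x 0 with rfl | hx
    · rw [ContinuousAt, hasFDerivAt_norm_smul_self_zero.fderiv]
      refine squeeze_zero_norm norm_fderiv_norm_smul_self_le ?_
      simpa using (continuous_norm.tendsto (0 : E)).const_mul 2
    · exact ((hsmooth x hx).fderiv_right (m := 1) (by norm_num)).continuousAt

lemma hasFDerivAt_norm_pow_three (x : E) :
    HasFDerivAt (fun x : E => ‖x‖ ^ 3) ((3 : ℝ) • innerSL ℝ (‖x‖ • x)) x := by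
  have h := hasFDerivAt_norm_rpow x (p := 3) (by norm_num)
  have hpow : (fun x : E => ‖x‖ ^ (3 : ℝ)) = fun x => ‖x‖ ^ 3 := by
    funext y; exact_mod_cast Real.rpow_natCast ‖y‖ 3
  rw [hpow] at h
  convert h using 1
  rw [map_smul, smul_smul]
  norm_num

lemma contDiff_norm_pow_three : ContDiff ℝ 2 (fun x : E => ‖x‖ ^ 3) :=
  contDiff_succ_iff_hasFDerivAt.2 ⟨_,
    ((innerSL ℝ).contDiff.comp contDiff_norm_smul_self).const_smul (3 : ℝ),
    hasFDerivAt_norm_pow_three⟩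

lemma contDiff_norm_pow : ∀ n : ℕ, 2 ≤ n → ContDiff ℝ 2 (fun x : E => ‖x‖ ^ n)
  | 2, _ => contDiff_norm_sq ℝ
  | 3, _ => contDiff_norm_pow_three
  | n + 4, _ => by
    simpa only [← pow_add] using (contDiff_norm_pow (n + 2) (by omega)).mul (contDiff_norm_sq ℝ)

end InnerProductSpace

lemma contDiff_max_zero_pow_three : ContDiff ℝ 2 (fun s : ℝ => max s 0 ^ 3) := by
  have hsplit : (fun s : ℝ => max s 0 ^ 3) = fun s => (‖s‖ ^ 3 + s ^ 3) / 2 := by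
    funext s
    rcases le_total s 0 with hs | hs
    · simp [max_eq_right hs, abs_of_nonpos hs]; ring
    · simp [max_eq_left hs, abs_of_nonneg hs]
  rw [hsplit]
  exact ((contDiff_norm_pow_three (E := ℝ)).add (contDiff_id.pow 3)).div_const 2

section QuinticCorrection

variable {E : Type*} [NormedAddCommGroup E] [InnerProductSpace ℝ E]

noncomputable def quinticCorrection (ρ A κ : ℝ) (v x : E) : ℝ :=
  -(max (1 - ‖x‖ / ρ) 0 ^ 3 * (-2 * (3 * ‖x‖ / ρ + 1) * ⟪x, v⟫
    + (6 * ‖x‖ ^ 2 / ρ ^ 2 + 3 * ‖x‖ / ρ + 1) * A + κ * ‖x‖ ^ 2))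

noncomputable def quinticExpansion (ρ A κ : ℝ) (v x : E) : ℝ :=
  ⟪x, v⟫ * (-6 * ‖x‖ ^ 4 / ρ ^ 4 + 16 * ‖x‖ ^ 3 / ρ ^ 3 - 12 * ‖x‖ ^ 2 / ρ ^ 2 + 2)
    + A * (6 * ‖x‖ ^ 5 / ρ ^ 5 - 15 * ‖x‖ ^ 4 / ρ ^ 4 + 10 * ‖x‖ ^ 3 / ρ ^ 3 - 1)
    + κ * (‖x‖ ^ 5 / ρ ^ 3 - 3 * ‖x‖ ^ 4 / ρ ^ 2 + 3 * ‖x‖ ^ 3 / ρ - ‖x‖ ^ 2)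

variable {ρ A κ : ℝ} {v x : E}

lemma quinticCorrection_of_le (hρ : 0 < ρ) (hx : ρ ≤ ‖x‖) : quinticCorrection ρ A κ v x = 0 := by
  have hmax : max (1 - ‖x‖ / ρ) 0 = 0 :=
    max_eq_right (by rw [sub_nonpos, one_le_div hρ]; exact hx)
  simp [quinticCorrection, hmax]

lemma quinticCorrection_eq_quinticExpansion (hρ : 0 < ρ) (hx : ‖x‖ ≤ ρ) :
    quinticCorrection ρ A κ v x = quinticExpansion ρ A κ v x := by
  have hmax : max (1 - ‖x‖ / ρ) 0 = 1 - ‖x‖ / ρ :=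
    max_eq_left (by rw [sub_nonneg, div_le_one hρ]; exact hx)
  rw [quinticCorrection, quinticExpansion, hmax]
  field_simp
  ring

lemma quinticExpansion_zero : quinticExpansion ρ A κ v 0 = -A := by
  simp [quinticExpansion]

lemma contDiff_quinticExpansion : ContDiff ℝ 2 (quinticExpansion ρ A κ v) := by
  have h2 := contDiff_norm_pow (E := E) 2 le_rfl
  have h3 := contDiff_norm_pow (E := E) 3 (by norm_num)
  have h4 := contDiff_norm_pow (E := E) 4 (by norm_num)
  have h5 := contDiff_norm_pow (E := E) 5 (by norm_num)
  have hinner : ContDiff ℝ 2 (fun y : E => ⟪y, v⟫) := contDiff_id.inner ℝ contDiff_const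
  unfold quinticExpansion
  fun_prop

lemma contDiffAt_quinticCorrection (hx : x ≠ 0) :
    ContDiffAt ℝ 2 (quinticCorrection ρ A κ v) x := by
  have hnorm : ContDiffAt ℝ 2 (‖·‖) x := contDiffAt_norm ℝ hx
  have hcut : ContDiffAt ℝ 2 (fun y : E => max (1 - ‖y‖ / ρ) 0 ^ 3) x :=
    contDiff_max_zero_pow_three.comp_contDiffAt x (by fun_prop)
  have hinner : ContDiffAt ℝ 2 (fun y : E => ⟪y, v⟫) x := contDiffAt_id.inner ℝ contDiffAt_const
  exact (hcut.mul (by fun_prop)).neg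

lemma contDiff_quinticCorrection (hρ : 0 < ρ) : ContDiff ℝ 2 (quinticCorrection ρ A κ v) := by
  refine contDiff_iff_contDiffAt.2 fun x => ?_
  rcases eq_or_ne x 0 with rfl | hx
  · refine (contDiff_quinticExpansion (ρ := ρ) (A := A) (κ := κ) (v := v)).contDiffAt
      |>.congr_of_eventuallyEq ?_
    filter_upwards [Metric.ball_mem_nhds (0 : E) hρ] with y hy
    exact quinticCorrection_eq_quinticExpansion hρ (mem_ball_zero_iff.1 hy).le
  · exact contDiffAt_quinticCorrection hx

lemma quinticModification_eq_add_quinticExpansion {c p : E} {δ t fv : ℝ} (hρ : ρ ≠ 0)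
    (hx : x ≠ c) (hA : A = ‖p - c‖ ^ 2 + t - fv) :
    (-6 / ρ ^ 4 * ⟪x - c, p - c⟫ / ‖x - c‖ + 6 * A / ρ ^ 5 + 1 / ρ ^ 3 * (1 - δ / 2)) * ‖x - c‖ ^ 5
      + (16 / ρ ^ 3 * ⟪x - c, p - c⟫ / ‖x - c‖ - 15 * A / ρ ^ 4
        - 3 / ρ ^ 2 * (1 - δ / 2)) * ‖x - c‖ ^ 4
      + (-12 / ρ ^ 2 * ⟪x - c, p - c⟫ / ‖x - c‖ + 10 * A / ρ ^ 3
        + 3 / ρ * (1 - δ / 2)) * ‖x - c‖ ^ 3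
      + δ / 2 * ‖x - c‖ ^ 2 + fv
    = ‖x - p‖ ^ 2 + t + quinticExpansion ρ A (1 - δ / 2) (p - c) (x - c) := by
  have hr : ‖x - c‖ ≠ 0 := norm_ne_zero_iff.2 (sub_ne_zero.2 hx)
  have hsq : ‖x - p‖ ^ 2 = ‖x - c‖ ^ 2 - 2 * ⟪x - c, p - c⟫ + ‖p - c‖ ^ 2 := by
    rw [show x - p = (x - c) - (p - c) by abel, norm_sub_sq_real]
  rw [hsq, quinticExpansion, hA]
  field_simp
  ring

end QuinticCorrection

lemma eq_add_sum_of_pairwiseDisjoint {ι X R : Type*} [AddCommMonoid R] {s : Finset ι}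
    {S : ι → Set X} {f g : X → R} {h : ι → X → R} (hS : (s : Set ι).PairwiseDisjoint S)
    (hh : ∀ i ∈ s, ∀ x ∉ S i, h i x = 0) (hin : ∀ i ∈ s, ∀ x ∈ S i, f x = g x + h i x)
    (hout : ∀ x, (∀ i ∈ s, x ∉ S i) → f x = g x) :
    f = fun x => g x + ∑ i ∈ s, h i x := by
  funext x
  by_cases hx : ∃ i ∈ s, x ∈ S i
  · obtain ⟨i, hi, hxi⟩ := hx
    rw [hin i hi x hxi, Finset.sum_eq_single_of_mem i hi fun j hj hji =>
      hh j hj x fun hxj => Set.disjoint_left.1 (hS hi hj hji.symm) hxi hxj]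
  · push Not at hx
    rw [hout x hx, Finset.sum_eq_zero fun i hi => hh i hi x (hx i hi), add_zero]

theorem d2type_contDiff_two_general
    {N : ℕ} (m : ℕ)
    (T : EuclideanSpace ℝ (Fin N)) (t : ℝ) (δ : ℝ)
    (M : ℕ → EuclideanSpace ℝ (Fin N)) (ρ : ℕ → ℝ) (fv : ℕ → ℝ)
    (hρ : ∀ i ∈ Finset.Icc 2 m, 0 < ρ i)
    (hdisj : ∀ i ∈ Finset.Icc 2 m, ∀ j ∈ Finset.Icc 2 m, i ≠ j →
      Disjoint (Metric.closedBall (M i) (ρ i)) (Metric.closedBall (M j) (ρ j)))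
    (A : ℕ → ℝ) (hA : ∀ i ∈ Finset.Icc 2 m, A i = ‖T - M i‖ ^ 2 + t - fv i)
    (Q : ℕ → EuclideanSpace ℝ (Fin N) → ℝ)
    (hQ : ∀ i ∈ Finset.Icc 2 m, ∀ x, x ≠ M i → Q i x =
      (-6 / (ρ i) ^ 4 * ⟪x - M i, T - M i⟫ / ‖x - M i‖ + 6 * A i / (ρ i) ^ 5
          + 1 / (ρ i) ^ 3 * (1 - δ / 2)) * ‖x - M i‖ ^ 5
        + (16 / (ρ i) ^ 3 * ⟪x - M i, T - M i⟫ / ‖x - M i‖ - 15 * A i / (ρ i) ^ 4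
          - 3 / (ρ i) ^ 2 * (1 - δ / 2)) * ‖x - M i‖ ^ 4
        + (-12 / (ρ i) ^ 2 * ⟪x - M i, T - M i⟫ / ‖x - M i‖ + 10 * A i / (ρ i) ^ 3
          + 3 / (ρ i) * (1 - δ / 2)) * ‖x - M i‖ ^ 3
        + δ / 2 * ‖x - M i‖ ^ 2 + fv i)
    (hQM : ∀ i ∈ Finset.Icc 2 m, Q i (M i) = fv i)
    (f : EuclideanSpace ℝ (Fin N) → ℝ)
    (hf1 : ∀ i ∈ Finset.Icc 2 m, ∀ x ∈ Metric.closedBall (M i) (ρ i), f x = Q i x)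
    (hf2 : ∀ x, (∀ i ∈ Finset.Icc 2 m, x ∉ Metric.closedBall (M i) (ρ i)) →
      f x = ‖x - T‖ ^ 2 + t) :
    ContDiff ℝ 2 f := by
  have hglue : f = fun x => ‖x - T‖ ^ 2 + t + ∑ i ∈ Finset.Icc 2 m,
      quinticCorrection (ρ i) (A i) (1 - δ / 2) (T - M i) (x - M i) := by
    refine eq_add_sum_of_pairwiseDisjoint (fun i hi j hj hij => hdisj i hi j hj hij)
      (fun i hi x hx => quinticCorrection_of_le (hρ i hi) ?_) (fun i hi x hx => ?_) hf2
    · simpa [dist_eq_norm] using (not_le.1 hx).le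
    · have hxρ : ‖x - M i‖ ≤ ρ i := by rwa [Metric.mem_closedBall, dist_eq_norm] at hx
      rw [hf1 i hi x hx, quinticCorrection_eq_quinticExpansion (hρ i hi) hxρ]
      rcases eq_or_ne x (M i) with rfl | hxM
      · rw [hQM i hi, sub_self, quinticExpansion_zero, norm_sub_rev, hA i hi]
        ring
      · rw [hQ i hi x hxM]
        exact quinticModification_eq_add_quinticExpansion (hρ i hi).ne' hxM (hA i hi)
  rw [hglue]
  exact (((contDiff_norm_sq ℝ).comp (contDiff_id.sub contDiff_const)).add contDiff_const).add
    (ContDiff.sum fun i hi => (contDiff_quinticCorrection (hρ i hi)).comp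
      (contDiff_id.sub contDiff_const))

/-- The D2-type test function `f` (equal to the quintic modification `Q i`
on each ball `S_i = closedBall (M i) (ρ i)`, `i = 2,…,m`, and to the paraboloid
`g(x) = ‖x - T‖² + t` elsewhere) is twice continuously differentiable on all of `ℝ^N`,
provided the balls are pairwise disjoint, do not contain `T`, and `δ > 0`. -/
theorem d2type_contDiff_two
    {N : ℕ} (hN : 1 ≤ N) (m : ℕ) (hm : 2 ≤ m)
    (T : EuclideanSpace ℝ (Fin N)) (t : ℝ) (δ : ℝ) (hδ : 0 < δ)
    (M : ℕ → EuclideanSpace ℝ (Fin N)) (ρ : ℕ → ℝ) (fv : ℕ → ℝ)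
    (hρ : ∀ i ∈ Finset.Icc 2 m, 0 < ρ i)
    (hMT : ∀ i ∈ Finset.Icc 2 m, M i ≠ T)
    (hMM : ∀ i ∈ Finset.Icc 2 m, ∀ j ∈ Finset.Icc 2 m, i ≠ j → M i ≠ M j)
    (hdisj : ∀ i ∈ Finset.Icc 2 m, ∀ j ∈ Finset.Icc 2 m, i ≠ j →
      Disjoint (Metric.closedBall (M i) (ρ i)) (Metric.closedBall (M j) (ρ j)))
    (hT : ∀ i ∈ Finset.Icc 2 m, T ∉ Metric.closedBall (M i) (ρ i))
    (A : ℕ → ℝ) (hA : ∀ i ∈ Finset.Icc 2 m, A i = ‖T - M i‖ ^ 2 + t - fv i)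
    (Q : ℕ → EuclideanSpace ℝ (Fin N) → ℝ)
    (hQ : ∀ i ∈ Finset.Icc 2 m, ∀ x, x ≠ M i → Q i x =
      (-6 / (ρ i) ^ 4 * ⟪x - M i, T - M i⟫ / ‖x - M i‖ + 6 * A i / (ρ i) ^ 5
          + 1 / (ρ i) ^ 3 * (1 - δ / 2)) * ‖x - M i‖ ^ 5
        + (16 / (ρ i) ^ 3 * ⟪x - M i, T - M i⟫ / ‖x - M i‖ - 15 * A i / (ρ i) ^ 4
          - 3 / (ρ i) ^ 2 * (1 - δ / 2)) * ‖x - M i‖ ^ 4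
        + (-12 / (ρ i) ^ 2 * ⟪x - M i, T - M i⟫ / ‖x - M i‖ + 10 * A i / (ρ i) ^ 3
          + 3 / (ρ i) * (1 - δ / 2)) * ‖x - M i‖ ^ 3
        + δ / 2 * ‖x - M i‖ ^ 2 + fv i)
    (hQM : ∀ i ∈ Finset.Icc 2 m, Q i (M i) = fv i)
    (f : EuclideanSpace ℝ (Fin N) → ℝ)
    (hf1 : ∀ i ∈ Finset.Icc 2 m, ∀ x ∈ Metric.closedBall (M i) (ρ i), f x = Q i x)
    (hf2 : ∀ x, (∀ i ∈ Finset.Icc 2 m, x ∉ Metric.closedBall (M i) (ρ i)) →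
      f x = ‖x - T‖ ^ 2 + t) :
    ContDiff ℝ 2 f :=
  d2type_contDiff_two_general m T t δ M ρ fv hρ hdisj A hA Q hQ hQM f hf1 hf2
end

section
/- The ND-type test function f is continuous on ℝ^N. That is, under the stated hypotheses (pairwise disjoint balls S_i), the function f defined by f(x) = P_i(x) for x ∈ S_i (i = 2,…,m) and f(x) = g(x) otherwise is continuous on all of ℝ^N. -/
open scoped RealInnerProductSpace

/-!
Write `g x = ‖x - T‖² + t` and `r = ‖x - Mᵢ‖`. Expanding `‖x - T‖²` around `Mᵢ` gives, for `r ≤ ρᵢ`,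
`Pᵢ x - g x = (1 - r/ρᵢ) (2⟪x - Mᵢ, T - Mᵢ⟫ - Aᵢ (1 + r/ρᵢ))`. Cutting the first factor off at `0`
yields a continuous correction vanishing outside `Sᵢ`; since the balls are disjoint,
`f = g + ∑ᵢ (correction)ᵢ`, a finite sum of continuous functions.
-/

open Metric

section BallCorrection

variable {E : Type*} [NormedAddCommGroup E] [InnerProductSpace ℝ E]

noncomputable def ballCorrection (c T : E) (ρ a : ℝ) (x : E) : ℝ :=
  max (1 - ‖x - c‖ / ρ) 0 * (2 * ⟪x - c, T - c⟫ - a * (1 + ‖x - c‖ / ρ))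

theorem continuous_ballCorrection (c T : E) (ρ a : ℝ) : Continuous (ballCorrection c T ρ a) := by
  unfold ballCorrection
  fun_prop

theorem ballCorrection_eq_zero_of_notMem {c T x : E} {ρ : ℝ} (a : ℝ) (hρ : 0 < ρ)
    (hx : x ∉ closedBall c ρ) : ballCorrection c T ρ a x = 0 := by
  rw [mem_closedBall, dist_eq_norm, not_le, ← div_lt_div_iff_of_pos_right hρ, div_self hρ.ne',
    ← sub_neg] at hx
  simp [ballCorrection, max_eq_right hx.le]

theorem paraboloid_add_ballCorrection_self {c T : E} {ρ a b t : ℝ}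
    (ha : a = ‖T - c‖ ^ 2 + t - b) : ‖c - T‖ ^ 2 + t + ballCorrection c T ρ a c = b := by
  simp [ballCorrection, norm_sub_rev c T, ha]

theorem paraboloid_add_ballCorrection_of_mem {c T x : E} {ρ a b t : ℝ} (hρ : 0 < ρ)
    (hx : x ∈ closedBall c ρ) (hxc : x ≠ c) (ha : a = ‖T - c‖ ^ 2 + t - b) :
    ‖x - T‖ ^ 2 + t + ballCorrection c T ρ a x =
      (1 - 2 / ρ * ⟪x - c, T - c⟫ / ‖x - c‖ + a / ρ ^ 2) * ‖x - c‖ ^ 2 + b := by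
  rw [mem_closedBall, dist_eq_norm] at hx
  have hr : ‖x - c‖ ≠ 0 := norm_ne_zero_iff.mpr (sub_ne_zero.mpr hxc)
  have hcut : 0 ≤ 1 - ‖x - c‖ / ρ := by rw [sub_nonneg, div_le_one hρ]; exact hx
  have hexp : ‖x - T‖ ^ 2 = ‖x - c‖ ^ 2 - 2 * ⟪x - c, T - c⟫ + ‖T - c‖ ^ 2 := by
    rw [show x - T = (x - c) - (T - c) by abel, norm_sub_sq_real]
  rw [ballCorrection, max_eq_left hcut, hexp, ha]
  field_simp
  ring

end BallCorrection

theorem ndtype_continuous_general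
    {N : ℕ} (m : ℕ)
    (T : EuclideanSpace ℝ (Fin N)) (t : ℝ)
    (M : ℕ → EuclideanSpace ℝ (Fin N)) (ρ : ℕ → ℝ) (fv : ℕ → ℝ)
    (hρ : ∀ i ∈ Finset.Icc 2 m, 0 < ρ i)
    (hdisj : ∀ i ∈ Finset.Icc 2 m, ∀ j ∈ Finset.Icc 2 m, i ≠ j →
      Disjoint (Metric.closedBall (M i) (ρ i)) (Metric.closedBall (M j) (ρ j)))
    (A : ℕ → ℝ) (hA : ∀ i ∈ Finset.Icc 2 m, A i = ‖T - M i‖ ^ 2 + t - fv i)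
    (P : ℕ → EuclideanSpace ℝ (Fin N) → ℝ)
    (hP : ∀ i ∈ Finset.Icc 2 m, ∀ x, x ≠ M i → P i x =
      (1 - 2 / (ρ i) * ⟪x - M i, T - M i⟫ / ‖x - M i‖ + A i / (ρ i) ^ 2)
          * ‖x - M i‖ ^ 2
        + fv i)
    (hPM : ∀ i ∈ Finset.Icc 2 m, P i (M i) = fv i)
    (f : EuclideanSpace ℝ (Fin N) → ℝ)
    (hf1 : ∀ i ∈ Finset.Icc 2 m, ∀ x ∈ Metric.closedBall (M i) (ρ i), f x = P i x)
    (hf2 : ∀ x, (∀ i ∈ Finset.Icc 2 m, x ∉ Metric.closedBall (M i) (ρ i)) →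
      f x = ‖x - T‖ ^ 2 + t) :
    Continuous f := by
  set h := fun i => ballCorrection (M i) T (ρ i) (A i)
  suffices f = fun x => ‖x - T‖ ^ 2 + t + ∑ i ∈ Finset.Icc 2 m, h i x by
    rw [this]
    have := fun i => continuous_ballCorrection (M i) T (ρ i) (A i)
    fun_prop
  funext x
  by_cases hx : ∃ i ∈ Finset.Icc 2 m, x ∈ closedBall (M i) (ρ i)
  · obtain ⟨i, hi, hxi⟩ := hx
    have hothers : ∀ j ∈ Finset.Icc 2 m, j ≠ i → h j x = 0 := fun j hj hji =>
      ballCorrection_eq_zero_of_notMem _ (hρ j hj)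
        fun hxj => Set.disjoint_left.mp (hdisj j hj i hi hji) hxj hxi
    rw [hf1 i hi x hxi, Finset.sum_eq_single_of_mem i hi hothers]
    rcases eq_or_ne x (M i) with rfl | hne
    · rw [hPM i hi, paraboloid_add_ballCorrection_self (hA i hi)]
    · rw [hP i hi x hne, paraboloid_add_ballCorrection_of_mem (hρ i hi) hxi hne (hA i hi)]
  · push Not at hx
    rw [hf2 x hx, left_eq_add]
    exact Finset.sum_eq_zero fun i hi => ballCorrection_eq_zero_of_notMem _ (hρ i hi) (hx i hi)

/-- The ND-type test function `f` (equal to the quadratic modification `P i`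
on each ball `S_i = closedBall (M i) (ρ i)`, `i = 2,…,m`, and to the paraboloid
`g(x) = ‖x - T‖² + t` elsewhere) is continuous on all of `ℝ^N`,
provided the balls are pairwise disjoint. -/
theorem ndtype_continuous
    {N : ℕ} (hN : 1 ≤ N) (m : ℕ) (hm : 2 ≤ m)
    (T : EuclideanSpace ℝ (Fin N)) (t : ℝ)
    (M : ℕ → EuclideanSpace ℝ (Fin N)) (ρ : ℕ → ℝ) (fv : ℕ → ℝ)
    (hρ : ∀ i ∈ Finset.Icc 2 m, 0 < ρ i)
    (hMT : ∀ i ∈ Finset.Icc 2 m, M i ≠ T)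
    (hMM : ∀ i ∈ Finset.Icc 2 m, ∀ j ∈ Finset.Icc 2 m, i ≠ j → M i ≠ M j)
    (hdisj : ∀ i ∈ Finset.Icc 2 m, ∀ j ∈ Finset.Icc 2 m, i ≠ j →
      Disjoint (Metric.closedBall (M i) (ρ i)) (Metric.closedBall (M j) (ρ j)))
    (A : ℕ → ℝ) (hA : ∀ i ∈ Finset.Icc 2 m, A i = ‖T - M i‖ ^ 2 + t - fv i)
    (P : ℕ → EuclideanSpace ℝ (Fin N) → ℝ)
    (hP : ∀ i ∈ Finset.Icc 2 m, ∀ x, x ≠ M i → P i x =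
      (1 - 2 / (ρ i) * ⟪x - M i, T - M i⟫ / ‖x - M i‖ + A i / (ρ i) ^ 2)
          * ‖x - M i‖ ^ 2
        + fv i)
    (hPM : ∀ i ∈ Finset.Icc 2 m, P i (M i) = fv i)
    (f : EuclideanSpace ℝ (Fin N) → ℝ)
    (hf1 : ∀ i ∈ Finset.Icc 2 m, ∀ x ∈ Metric.closedBall (M i) (ρ i), f x = P i x)
    (hf2 : ∀ x, (∀ i ∈ Finset.Icc 2 m, x ∉ Metric.closedBall (M i) (ρ i)) →
      f x = ‖x - T‖ ^ 2 + t) :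
    Continuous f :=
  ndtype_continuous_general m T t M ρ fv hρ hdisj A hA P hP hPM f hf1 hf2
end

section
/- The cubic modification agrees with the paraboloid on the boundary sphere: for every x ∈ ℝ^N with ‖x − M_i‖ = ρ_i, one has C_i(x) = g(x) = ‖x − T‖² + t. -/
/-! On the sphere `‖x - M‖ = ρ` the cubic collapses to `f + A + ρ ^ 2 - 2 ⟪x - M, T - M⟫`, which is
`‖x - T‖ ^ 2 + t` after expanding `‖(x - M) - (T - M)‖ ^ 2`. -/

open scoped RealInnerProductSpace

section CubicModification

variable {E : Type*} [NormedAddCommGroup E] [InnerProductSpace ℝ E]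

/-- `A` stands for `‖T - M‖ ^ 2 + t - f`, the gap between the paraboloid `‖· - T‖ ^ 2 + t` and
the value `f` at the centre `M`. -/
noncomputable def cubicModification (T M : E) (ρ f A : ℝ) (x : E) : ℝ :=
  (2 / ρ ^ 2 * ⟪x - M, T - M⟫ / ‖x - M‖ - 2 * A / ρ ^ 3) * ‖x - M‖ ^ 3
    + (1 - 4 / ρ * ⟪x - M, T - M⟫ / ‖x - M‖ + 3 * A / ρ ^ 2) * ‖x - M‖ ^ 2 + f

theorem norm_sub_sq_eq_of_norm_sub_eq {x M T : E} {ρ : ℝ} (hx : ‖x - M‖ = ρ) :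
    ‖x - T‖ ^ 2 = ρ ^ 2 - 2 * ⟪x - M, T - M⟫ + ‖T - M‖ ^ 2 := by
  rw [show x - T = (x - M) - (T - M) by abel, norm_sub_sq_real, hx]

theorem cubicModification_eq_of_norm_sub_eq {T M x : E} {t ρ f : ℝ} (hρ : ρ ≠ 0)
    (hx : ‖x - M‖ = ρ) :
    cubicModification T M ρ f (‖T - M‖ ^ 2 + t - f) x = ‖x - T‖ ^ 2 + t := by
  rw [cubicModification, norm_sub_sq_eq_of_norm_sub_eq (T := T) hx, hx]
  field_simp
  ring

end CubicModification

theorem cubic_boundary_value_general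
    {N : ℕ}
    (T : EuclideanSpace ℝ (Fin N)) (t : ℝ)
    (Mi : EuclideanSpace ℝ (Fin N))
    (ρi : ℝ) (hρ : 0 < ρi) (fi : ℝ)
    (A : ℝ) (hA : A = ‖T - Mi‖ ^ 2 + t - fi)
    (C : EuclideanSpace ℝ (Fin N) → ℝ)
    (hC : ∀ x, x ≠ Mi → C x =
      (2 / ρi ^ 2 * ⟪x - Mi, T - Mi⟫ / ‖x - Mi‖ - 2 * A / ρi ^ 3) * ‖x - Mi‖ ^ 3
        + (1 - 4 / ρi * ⟪x - Mi, T - Mi⟫ / ‖x - Mi‖ + 3 * A / ρi ^ 2) * ‖x - Mi‖ ^ 2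
        + fi) :
    ∀ x : EuclideanSpace ℝ (Fin N), ‖x - Mi‖ = ρi → C x = ‖x - T‖ ^ 2 + t := by
  intro x hx
  have hxM : x ≠ Mi := by
    rintro rfl
    simp only [sub_self, norm_zero] at hx
    exact hρ.ne hx
  subst hA
  exact (hC x hxM).trans (cubicModification_eq_of_norm_sub_eq hρ.ne' hx)

/-- The cubic modification agrees with the paraboloid on the boundary
sphere: for every `x` with `‖x - Mi‖ = ρi`, `C x = g x = ‖x - T‖² + t`. -/
theorem cubic_boundary_value
    {N : ℕ} (hN : 1 ≤ N)
    (T : EuclideanSpace ℝ (Fin N)) (t : ℝ)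
    (Mi : EuclideanSpace ℝ (Fin N)) (hMT : Mi ≠ T)
    (ρi : ℝ) (hρ : 0 < ρi) (fi : ℝ)
    (A : ℝ) (hA : A = ‖T - Mi‖ ^ 2 + t - fi)
    (C : EuclideanSpace ℝ (Fin N) → ℝ)
    (hC : ∀ x, x ≠ Mi → C x =
      (2 / ρi ^ 2 * ⟪x - Mi, T - Mi⟫ / ‖x - Mi‖ - 2 * A / ρi ^ 3) * ‖x - Mi‖ ^ 3
        + (1 - 4 / ρi * ⟪x - Mi, T - Mi⟫ / ‖x - Mi‖ + 3 * A / ρi ^ 2) * ‖x - Mi‖ ^ 2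
        + fi) :
    ∀ x : EuclideanSpace ℝ (Fin N), ‖x - Mi‖ = ρi → C x = ‖x - T‖ ^ 2 + t :=
  cubic_boundary_value_general T t Mi ρi hρ fi A hA C hC
end

section
/- The gradient of the cubic modification agrees with the gradient of the paraboloid on the boundary sphere: for every x ∈ ℝ^N with ‖x − M_i‖ = ρ_i, the function C_i is differentiable at x and its gradient at x equals 2(x − T), which is the gradient of g(x) = ‖x − T‖² + t at x. -/
/-!
Write `u = y - Mi`, `r = ‖u‖`, `P = ⟪u, T - Mi⟫`. Away from `Mi` the cubic modification is
`C = R(r) + Q(r) P + fi` with `R(r) = r² + 3A r²/ρ² - 2A r³/ρ³` and `Q(r) = 2r²/ρ² - 4r/ρ`,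
so `∇C = R'(r) ∇r + Q'(r) P ∇r + Q(r) (T - Mi)` with `∇r = u / r`. At `r = ρ` we have
`R'(ρ) = 2ρ`, `Q'(ρ) = 0` and `Q(ρ) = -2`, which leaves `2u - 2(T - Mi) = 2(x - T)`.
-/

open scoped RealInnerProductSpace

section GradientCalculus

variable {F : Type*} [NormedAddCommGroup F] [InnerProductSpace ℝ F] [CompleteSpace F]
  {f g : F → ℝ} {f' g' x : F}

theorem HasGradientAt.add (hf : HasGradientAt f f' x) (hg : HasGradientAt g g' x) :
    HasGradientAt (fun y => f y + g y) (f' + g') x := by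
  rw [hasGradientAt_iff_hasFDerivAt] at hf hg
  rw [hasGradientAt_iff_hasFDerivAt, map_add]
  exact hf.add hg

theorem HasGradientAt.add_const (hf : HasGradientAt f f' x) (c : ℝ) :
    HasGradientAt (fun y => f y + c) f' x := by
  rw [hasGradientAt_iff_hasFDerivAt] at hf ⊢
  exact hf.add_const c

theorem HasGradientAt.mul (hf : HasGradientAt f f' x) (hg : HasGradientAt g g' x) :
    HasGradientAt (fun y => f y * g y) (f x • g' + g x • f') x := by
  rw [hasGradientAt_iff_hasFDerivAt] at hf hg
  rw [hasGradientAt_iff_hasFDerivAt, map_add, map_smul, map_smul]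
  exact hf.mul hg

theorem HasDerivAt.comp_hasGradientAt {h : ℝ → ℝ} {h' : ℝ} (hh : HasDerivAt h h' (f x))
    (hf : HasGradientAt f f' x) : HasGradientAt (fun y => h (f y)) (h' • f') x := by
  rw [hasGradientAt_iff_hasFDerivAt] at hf
  rw [hasGradientAt_iff_hasFDerivAt, map_smul]
  exact hh.comp_hasFDerivAt x hf

theorem hasGradientAt_norm_sub_sq (a x : F) :
    HasGradientAt (fun y => ‖y - a‖ ^ 2) ((2 : ℝ) • (x - a)) x := by
  rw [hasGradientAt_iff_hasFDerivAt]
  refine ((hasFDerivAt_id x).sub_const a).norm_sq.congr_fderiv ?_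
  ext y
  simp [two_mul]

theorem hasGradientAt_norm_sub {a x : F} (hx : x ≠ a) :
    HasGradientAt (fun y => ‖y - a‖) (‖x - a‖⁻¹ • (x - a)) x := by
  have hpos : 0 < ‖x - a‖ ^ 2 := pow_pos (norm_pos_iff.mpr (sub_ne_zero.mpr hx)) 2
  have hsqrt := HasDerivAt.comp_hasGradientAt (f := fun y => ‖y - a‖ ^ 2)
    (Real.hasDerivAt_sqrt hpos.ne') (hasGradientAt_norm_sub_sq a x)
  simp only [Real.sqrt_sq (norm_nonneg _), smul_smul] at hsqrt
  convert hsqrt using 2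
  field_simp

theorem hasGradientAt_inner_sub_left (a v x : F) : HasGradientAt (fun y => ⟪y - a, v⟫) v x := by
  rw [hasGradientAt_iff_hasFDerivAt]
  refine ((innerSL ℝ v).hasFDerivAt.comp x ((hasFDerivAt_id x).sub_const a)).congr_of_eventuallyEq
    (Filter.Eventually.of_forall fun y => real_inner_comm _ _) |>.congr_fderiv ?_
  ext y
  simp

end GradientCalculus

section CubicProfile

variable {ρ : ℝ} (A : ℝ)

noncomputable def cubicRadialTerm (ρ A r : ℝ) : ℝ :=
  r ^ 2 + 3 * A / ρ ^ 2 * r ^ 2 - 2 * A / ρ ^ 3 * r ^ 3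

noncomputable def cubicInnerCoeff (ρ r : ℝ) : ℝ := 2 / ρ ^ 2 * r ^ 2 - 4 / ρ * r

theorem hasDerivAt_cubicRadialTerm (hρ : ρ ≠ 0) :
    HasDerivAt (cubicRadialTerm ρ A) (2 * ρ) ρ := by
  refine (((hasDerivAt_pow 2 ρ).fun_add ((hasDerivAt_pow 2 ρ).const_mul (3 * A / ρ ^ 2))).fun_sub
    ((hasDerivAt_pow 3 ρ).const_mul (2 * A / ρ ^ 3))).congr_deriv ?_
  field_simp
  ring

theorem hasDerivAt_cubicInnerCoeff (hρ : ρ ≠ 0) : HasDerivAt (cubicInnerCoeff ρ) 0 ρ := by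
  refine (((hasDerivAt_pow 2 ρ).const_mul (2 / ρ ^ 2)).fun_sub
    ((hasDerivAt_id' ρ).const_mul (4 / ρ))).congr_deriv ?_
  field_simp
  ring

theorem cubicInnerCoeff_self (hρ : ρ ≠ 0) : cubicInnerCoeff ρ ρ = -2 := by
  unfold cubicInnerCoeff
  field_simp
  ring

theorem cubic_eq_cubicRadialTerm_add_cubicInnerCoeff_mul {r : ℝ} (hr : r ≠ 0) (p c : ℝ) :
    (2 / ρ ^ 2 * p / r - 2 * A / ρ ^ 3) * r ^ 3 + (1 - 4 / ρ * p / r + 3 * A / ρ ^ 2) * r ^ 2 + c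
      = cubicRadialTerm ρ A r + cubicInnerCoeff ρ r * p + c := by
  unfold cubicRadialTerm cubicInnerCoeff
  have hp : p / r * r = p := div_mul_cancel₀ p hr
  simp only [mul_div_assoc]
  linear_combination (2 / ρ ^ 2 * r ^ 2 - 4 / ρ * r) * hp

end CubicProfile

theorem cubic_boundary_gradient_general
    {N : ℕ}
    (T : EuclideanSpace ℝ (Fin N)) (t : ℝ)
    (Mi : EuclideanSpace ℝ (Fin N))
    (ρi : ℝ) (hρ : 0 < ρi) (fi : ℝ)
    (A : ℝ)
    (C : EuclideanSpace ℝ (Fin N) → ℝ)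
    (hC : ∀ x, x ≠ Mi → C x =
      (2 / ρi ^ 2 * ⟪x - Mi, T - Mi⟫ / ‖x - Mi‖ - 2 * A / ρi ^ 3) * ‖x - Mi‖ ^ 3
        + (1 - 4 / ρi * ⟪x - Mi, T - Mi⟫ / ‖x - Mi‖ + 3 * A / ρi ^ 2) * ‖x - Mi‖ ^ 2
        + fi) :
    ∀ x : EuclideanSpace ℝ (Fin N), ‖x - Mi‖ = ρi →
      HasGradientAt C ((2 : ℝ) • (x - T)) x ∧
      HasGradientAt (fun y : EuclideanSpace ℝ (Fin N) => ‖y - T‖ ^ 2 + t)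
        ((2 : ℝ) • (x - T)) x := by
  intro x hx
  refine ⟨?_, (hasGradientAt_norm_sub_sq T x).add_const t⟩
  have hxM : x ≠ Mi := by
    rintro rfl
    exact hρ.ne (by simpa using hx)
  have hC_near : C =ᶠ[nhds x] fun y =>
      cubicRadialTerm ρi A ‖y - Mi‖ + cubicInnerCoeff ρi ‖y - Mi‖ * ⟪y - Mi, T - Mi⟫ + fi := by
    filter_upwards [eventually_ne_nhds hxM] with y hy
    rw [hC y hy, cubic_eq_cubicRadialTerm_add_cubicInnerCoeff_mul A
      (norm_ne_zero_iff.mpr (sub_ne_zero.mpr hy))]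
  have hr := hasGradientAt_norm_sub hxM
  have hR := HasDerivAt.comp_hasGradientAt (f := fun y => ‖y - Mi‖)
    (by rw [hx]; exact hasDerivAt_cubicRadialTerm A hρ.ne') hr
  have hQ := HasDerivAt.comp_hasGradientAt (f := fun y => ‖y - Mi‖)
    (by rw [hx]; exact hasDerivAt_cubicInnerCoeff hρ.ne') hr
  have hCgrad := ((hR.add (hQ.mul (hasGradientAt_inner_sub_left Mi (T - Mi) x))).add_const fi)
  convert hCgrad.congr_of_eventuallyEq hC_near using 1
  rw [hx, cubicInnerCoeff_self hρ.ne', smul_smul, mul_assoc, mul_inv_cancel₀ hρ.ne', zero_smul,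
    smul_zero]
  module

/-- The gradient of the cubic modification agrees with the gradient of the
paraboloid on the boundary sphere: for every `x` with `‖x - Mi‖ = ρi`, the function `C`
is differentiable at `x` with gradient `2 • (x - T)`, the gradient of `g(x) = ‖x - T‖² + t`. -/
theorem cubic_boundary_gradient
    {N : ℕ} (hN : 1 ≤ N)
    (T : EuclideanSpace ℝ (Fin N)) (t : ℝ)
    (Mi : EuclideanSpace ℝ (Fin N)) (hMT : Mi ≠ T)
    (ρi : ℝ) (hρ : 0 < ρi) (fi : ℝ)
    (A : ℝ) (hA : A = ‖T - Mi‖ ^ 2 + t - fi)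
    (C : EuclideanSpace ℝ (Fin N) → ℝ)
    (hC : ∀ x, x ≠ Mi → C x =
      (2 / ρi ^ 2 * ⟪x - Mi, T - Mi⟫ / ‖x - Mi‖ - 2 * A / ρi ^ 3) * ‖x - Mi‖ ^ 3
        + (1 - 4 / ρi * ⟪x - Mi, T - Mi⟫ / ‖x - Mi‖ + 3 * A / ρi ^ 2) * ‖x - Mi‖ ^ 2
        + fi) :
    ∀ x : EuclideanSpace ℝ (Fin N), ‖x - Mi‖ = ρi →
      HasGradientAt C ((2 : ℝ) • (x - T)) x ∧
      HasGradientAt (fun y : EuclideanSpace ℝ (Fin N) => ‖y - T‖ ^ 2 + t)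
        ((2 : ℝ) • (x - T)) x :=
  cubic_boundary_gradient_general T t Mi ρi hρ fi A C hC
end

section
/- The gradient of the quintic modification agrees with the gradient of the paraboloid on the boundary sphere: for every δ > 0 and every x ∈ ℝ^N with ‖x − M_i‖ = ρ_i, the function Q_i is differentiable at x and its gradient at x equals 2(x − T). -/
open scoped RealInnerProductSpace

/-!
With `r = ‖x - Mᵢ‖`, the quintic modification is `⟪x - Mᵢ, T - Mᵢ⟫ α(r) + β(r)` for two
polynomials `α, β` in `r`, so away from `Mᵢ` its gradient is
`α(r) (T - Mᵢ) + (⟪x - Mᵢ, T - Mᵢ⟫ α'(r) + β'(r)) (x - Mᵢ) / r`.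
The coefficients are tuned so that `α(ρᵢ) = -2`, `α'(ρᵢ) = 0` and `β'(ρᵢ) = 2ρᵢ` (the terms in
`Aᵢ` and `δ` cancel), which turns the gradient on the sphere into
`-2 (T - Mᵢ) + 2 (x - Mᵢ) = 2 (x - T)`.
-/

section Radial

variable {E : Type*} [NormedAddCommGroup E] [InnerProductSpace ℝ E]

theorem hasFDerivAt_norm_sub {c x : E} (hx : x ≠ c) :
    HasFDerivAt (fun y => ‖y - c‖) (‖x - c‖⁻¹ • innerSL ℝ (x - c)) x := by
  have hr : ‖x - c‖ ≠ 0 := norm_ne_zero_iff.mpr (sub_ne_zero.mpr hx)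
  have hsqrt := (Real.hasDerivAt_sqrt (pow_ne_zero 2 hr)).comp_hasFDerivAt x
    ((hasFDerivAt_id x).sub_const c).norm_sq
  have hnorm : (fun y => ‖y - c‖) = fun y => √(‖y - c‖ ^ 2) :=
    funext fun y => (Real.sqrt_sq (norm_nonneg _)).symm
  rw [hnorm]
  refine hsqrt.congr_fderiv ?_
  ext w
  simp only [Real.sqrt_sq (norm_nonneg _), id_eq, ContinuousLinearMap.comp_id,
    smul_apply, coe_innerSL_apply, nsmul_eq_mul, Nat.cast_ofNat, smul_eq_mul]
  field_simp

variable [CompleteSpace E]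

theorem hasGradientAt_inner_mul_add_radial {α β : ℝ → ℝ} {α' β' : ℝ} {c x : E} (v : E)
    (hx : x ≠ c) (hα : HasDerivAt α α' ‖x - c‖) (hβ : HasDerivAt β β' ‖x - c‖) :
    HasGradientAt (fun y => ⟪y - c, v⟫ * α ‖y - c‖ + β ‖y - c‖)
      (α ‖x - c‖ • v + ((⟪x - c, v⟫ * α' + β') / ‖x - c‖) • (x - c)) x := by
  have hr := hasFDerivAt_norm_sub hx
  have hp : HasFDerivAt (fun y => ⟪y - c, v⟫) (innerSLFlip ℝ v) x :=
    (innerSLFlip ℝ v).hasFDerivAt.comp x ((hasFDerivAt_id x).sub_const c)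
  rw [hasGradientAt_iff_hasFDerivAt]
  refine ((hp.mul (hα.comp_hasFDerivAt x hr)).add (hβ.comp_hasFDerivAt x hr)).congr_fderiv ?_
  ext w
  simp only [Function.comp_apply, add_apply, smul_apply,
    coe_innerSL_apply, smul_eq_mul, InnerProductSpace.toDual_apply_apply,
    inner_add_left, real_inner_smul_left, real_inner_comm w v]
  rw [innerSLFlip_apply_apply]
  ring

end Radial

noncomputable section Quintic

variable (ρ A δ f : ℝ)

def quinticAngular (r : ℝ) : ℝ :=
  -6 / ρ ^ 4 * r ^ 4 + 16 / ρ ^ 3 * r ^ 3 - 12 / ρ ^ 2 * r ^ 2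

def quinticRadial (r : ℝ) : ℝ :=
  (6 * A / ρ ^ 5 + 1 / ρ ^ 3 * (1 - δ / 2)) * r ^ 5
    + (-(15 * A / ρ ^ 4) - 3 / ρ ^ 2 * (1 - δ / 2)) * r ^ 4
    + (10 * A / ρ ^ 3 + 3 / ρ * (1 - δ / 2)) * r ^ 3 + δ / 2 * r ^ 2 + f

theorem quinticModification_eq {p r : ℝ} (hr : r ≠ 0) :
    (-6 / ρ ^ 4 * p / r + 6 * A / ρ ^ 5 + 1 / ρ ^ 3 * (1 - δ / 2)) * r ^ 5
        + (16 / ρ ^ 3 * p / r - 15 * A / ρ ^ 4 - 3 / ρ ^ 2 * (1 - δ / 2)) * r ^ 4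
        + (-12 / ρ ^ 2 * p / r + 10 * A / ρ ^ 3 + 3 / ρ * (1 - δ / 2)) * r ^ 3
        + δ / 2 * r ^ 2 + f
      = p * quinticAngular ρ r + quinticRadial ρ A δ f r := by
  unfold quinticAngular quinticRadial
  linear_combination (-6 / ρ ^ 4 * r ^ 4 + 16 / ρ ^ 3 * r ^ 3 - 12 / ρ ^ 2 * r ^ 2)
    * div_mul_cancel₀ p hr

variable {ρ}

theorem quinticAngular_self (hρ : ρ ≠ 0) : quinticAngular ρ ρ = -2 := by
  unfold quinticAngular
  field_simp
  ring

theorem hasDerivAt_quinticAngular_self (hρ : ρ ≠ 0) : HasDerivAt (quinticAngular ρ) 0 ρ := by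
  refine ((((hasDerivAt_pow 4 ρ).const_mul (-6 / ρ ^ 4)).add
    ((hasDerivAt_pow 3 ρ).const_mul (16 / ρ ^ 3))).sub
    ((hasDerivAt_pow 2 ρ).const_mul (12 / ρ ^ 2))).congr_deriv ?_
  norm_num
  field_simp
  ring

theorem hasDerivAt_quinticRadial_self (hρ : ρ ≠ 0) :
    HasDerivAt (quinticRadial ρ A δ f) (2 * ρ) ρ := by
  refine (((((((hasDerivAt_pow 5 ρ).const_mul _).add ((hasDerivAt_pow 4 ρ).const_mul _)).add
    ((hasDerivAt_pow 3 ρ).const_mul _)).add ((hasDerivAt_pow 2 ρ).const_mul (δ / 2))).add_const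
    f)).congr_deriv ?_
  norm_num
  field_simp
  ring

end Quintic

theorem quintic_boundary_gradient_general
    {N : ℕ}
    (T : EuclideanSpace ℝ (Fin N))
    (Mi : EuclideanSpace ℝ (Fin N))
    (ρi : ℝ) (hρ : 0 < ρi) (fi : ℝ) (δ : ℝ)
    (A : ℝ)
    (Q : EuclideanSpace ℝ (Fin N) → ℝ)
    (hQ : ∀ x, x ≠ Mi → Q x =
      (-6 / ρi ^ 4 * ⟪x - Mi, T - Mi⟫ / ‖x - Mi‖ + 6 * A / ρi ^ 5
          + 1 / ρi ^ 3 * (1 - δ / 2)) * ‖x - Mi‖ ^ 5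
        + (16 / ρi ^ 3 * ⟪x - Mi, T - Mi⟫ / ‖x - Mi‖ - 15 * A / ρi ^ 4
          - 3 / ρi ^ 2 * (1 - δ / 2)) * ‖x - Mi‖ ^ 4
        + (-12 / ρi ^ 2 * ⟪x - Mi, T - Mi⟫ / ‖x - Mi‖ + 10 * A / ρi ^ 3
          + 3 / ρi * (1 - δ / 2)) * ‖x - Mi‖ ^ 3
        + δ / 2 * ‖x - Mi‖ ^ 2 + fi) :
    ∀ x : EuclideanSpace ℝ (Fin N), ‖x - Mi‖ = ρi →
      HasGradientAt Q ((2 : ℝ) • (x - T)) x := by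
  intro x hx
  have hxM : x ≠ Mi := by
    rintro rfl
    simp only [sub_self, norm_zero] at hx
    exact hρ.ne hx
  have hα : HasDerivAt (quinticAngular ρi) 0 ‖x - Mi‖ := by
    rw [hx]; exact hasDerivAt_quinticAngular_self hρ.ne'
  have hβ : HasDerivAt (quinticRadial ρi A δ fi) (2 * ρi) ‖x - Mi‖ := by
    rw [hx]; exact hasDerivAt_quinticRadial_self A δ fi hρ.ne'
  have hgrad := hasGradientAt_inner_mul_add_radial (T - Mi) hxM hα hβ
  rw [hx, quinticAngular_self hρ.ne', mul_zero, zero_add, mul_div_cancel_right₀ _ hρ.ne'] at hgrad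
  convert hgrad.congr_of_eventuallyEq ?_ using 1
  · module
  · filter_upwards [eventually_ne_nhds hxM] with y hy
    rw [hQ y hy]
    exact quinticModification_eq ρi A δ fi (norm_ne_zero_iff.mpr (sub_ne_zero.mpr hy))

/-- The gradient of the quintic modification agrees with the gradient of the
paraboloid on the boundary sphere: for every `δ > 0` and every `x` with `‖x - Mi‖ = ρi`,
the function `Q` is differentiable at `x` with gradient `2 • (x - T)`. -/
theorem quintic_boundary_gradient
    {N : ℕ} (hN : 1 ≤ N)
    (T : EuclideanSpace ℝ (Fin N)) (t : ℝ)
    (Mi : EuclideanSpace ℝ (Fin N)) (hMT : Mi ≠ T)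
    (ρi : ℝ) (hρ : 0 < ρi) (fi : ℝ) (δ : ℝ) (hδ : 0 < δ)
    (A : ℝ) (hA : A = ‖T - Mi‖ ^ 2 + t - fi)
    (Q : EuclideanSpace ℝ (Fin N) → ℝ)
    (hQ : ∀ x, x ≠ Mi → Q x =
      (-6 / ρi ^ 4 * ⟪x - Mi, T - Mi⟫ / ‖x - Mi‖ + 6 * A / ρi ^ 5
          + 1 / ρi ^ 3 * (1 - δ / 2)) * ‖x - Mi‖ ^ 5
        + (16 / ρi ^ 3 * ⟪x - Mi, T - Mi⟫ / ‖x - Mi‖ - 15 * A / ρi ^ 4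
          - 3 / ρi ^ 2 * (1 - δ / 2)) * ‖x - Mi‖ ^ 4
        + (-12 / ρi ^ 2 * ⟪x - Mi, T - Mi⟫ / ‖x - Mi‖ + 10 * A / ρi ^ 3
          + 3 / ρi * (1 - δ / 2)) * ‖x - Mi‖ ^ 3
        + δ / 2 * ‖x - Mi‖ ^ 2 + fi) :
    ∀ x : EuclideanSpace ℝ (Fin N), ‖x - Mi‖ = ρi →
      HasGradientAt Q ((2 : ℝ) • (x - T)) x :=
  quintic_boundary_gradient_general T Mi ρi hρ fi δ A Q hQ
end

section
/- The second derivative of the quintic modification agrees with that of the paraboloid on the boundary sphere: for every δ > 0 and every x ∈ ℝ^N with ‖x − M_i‖ = ρ_i, the function Q_i is twice differentiable at x and its second-order partial derivatives satisfy ∂²Q_i/∂x_j∂x_k(x) = 2 if j = k and 0 if j ≠ k (i.e., the Hessian of Q_i at x equals 2·Id, the Hessian of g(x) = ‖x − T‖² + t). -/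
/-!
Off `Mi`, `Q x = ⟪T - Mi, x - Mi⟫ * p ‖x - Mi‖ + q ‖x - Mi‖` for two explicit polynomials `p`
and `q`. At `r = ρi` the profile `p` has a double critical point (`p' = p'' = 0`), so the first
term has vanishing Hessian there, while `q' = 2r` and `q'' = 2` agree with the profile `r ↦ r²`,
so the radial term has the Hessian `2 • ⟪·, ·⟫` of `‖x - T‖² + t`. Radial functions are
differentiated by writing `‖x - c‖ = √‖x - c‖²`, the square root being smooth away from `0`.
-/

open scoped RealInnerProductSpace
open Polynomial

namespace Polynomial

theorem hasDerivAt_eval_sqrt (p : ℝ[X]) {u : ℝ} (hu : 0 < u) :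
    HasDerivAt (fun u => p.eval √u) (p.derivative.eval √u / (2 * √u)) u :=
  ((p.hasDerivAt √u).comp u (Real.hasDerivAt_sqrt hu.ne')).congr_deriv (by ring)

theorem hasDerivAt_derivative_eval_sqrt_div_sqrt (p : ℝ[X]) {s : ℝ} (hs : 0 < s) :
    HasDerivAt (fun u => p.derivative.eval √u / √u)
      ((p.derivative.derivative.eval s - p.derivative.eval s / s) / (2 * s ^ 2)) (s ^ 2) := by
  have hdiv := (p.derivative.hasDerivAt s).div (hasDerivAt_id s) hs.ne'
  rw [← Real.sqrt_sq hs.le] at hdiv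
  refine (hdiv.comp (s ^ 2) (Real.hasDerivAt_sqrt (by positivity))).congr_deriv ?_
  simp only [Real.sqrt_sq hs.le, id]
  field_simp

end Polynomial

section InnerProductSpace

variable {E : Type*} [NormedAddCommGroup E] [InnerProductSpace ℝ E]

theorem HasDerivAt.hasFDerivAt_comp_norm_sub_sq {φ : ℝ → ℝ} {φ' : ℝ} {c y : E}
    (h : HasDerivAt φ φ' (‖y - c‖ ^ 2)) :
    HasFDerivAt (fun z => φ (‖z - c‖ ^ 2)) ((2 * φ') • innerSL ℝ (y - c)) y := by
  refine (h.comp_hasFDerivAt y ((hasFDerivAt_id y).sub_const c).norm_sq).congr_fderiv ?_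
  ext z
  simp only [id_eq, ContinuousLinearMap.comp_id, smul_apply, coe_innerSL_apply, nsmul_eq_mul,
    Nat.cast_ofNat, smul_eq_mul]
  ring

namespace Polynomial

theorem hasFDerivAt_eval_norm_sub (p : ℝ[X]) {c y : E} (hy : y ≠ c) :
    HasFDerivAt (fun z => p.eval ‖z - c‖)
      ((p.derivative.eval ‖y - c‖ / ‖y - c‖) • innerSL ℝ (y - c)) y := by
  have hr : 0 < ‖y - c‖ := norm_pos_iff.mpr (sub_ne_zero.mpr hy)
  have h := (p.hasDerivAt_eval_sqrt (pow_pos hr 2)).hasFDerivAt_comp_norm_sub_sq (c := c) (y := y)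
  simp only [Real.sqrt_sq (norm_nonneg _)] at h
  refine h.congr_fderiv ?_
  congr 1
  field_simp

/-- The hypothesis says that the radial and the tangential second derivatives `p''(r)` and
`p'(r) / r` agree, so that the Hessian of `z ↦ p ‖z - c‖` at `y` is a multiple of the identity. -/
theorem hasFDerivAt_derivative_eval_norm_sub_div_smul (p : ℝ[X]) {c y : E} (hy : y ≠ c)
    (hp : p.derivative.derivative.eval ‖y - c‖ = p.derivative.eval ‖y - c‖ / ‖y - c‖) :
    HasFDerivAt (fun z => (p.derivative.eval ‖z - c‖ / ‖z - c‖) • innerSL ℝ (z - c))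
      ((p.derivative.eval ‖y - c‖ / ‖y - c‖) • innerSL ℝ) y := by
  have hr : 0 < ‖y - c‖ := norm_pos_iff.mpr (sub_ne_zero.mpr hy)
  have hcoeff :=
    (p.hasDerivAt_derivative_eval_sqrt_div_sqrt hr).hasFDerivAt_comp_norm_sub_sq (c := c)
  simp only [Real.sqrt_sq (norm_nonneg _), hp, sub_self, zero_div, mul_zero, zero_smul] at hcoeff
  have hinner : HasFDerivAt (fun z => innerSL ℝ (z - c)) (innerSL ℝ : E →L[ℝ] E →L[ℝ] ℝ) y :=
    (innerSL ℝ).hasFDerivAt.comp y ((hasFDerivAt_id y).sub_const c)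
  refine (hcoeff.smul hinner).congr_fderiv ?_
  simp

end Polynomial

/-- `fun z => f z • g' z + g z • ℓ` is the derivative of `f * g` for `f` affine with slope `ℓ`:
the product of an affine function with a function whose first and second derivatives vanish at
`y` has vanishing second derivative at `y`. -/
theorem hasFDerivAt_smul_add_smul_zero {f g : E → ℝ} {ℓ : E →L[ℝ] ℝ} {g' : E → E →L[ℝ] ℝ}
    {y : E} (hf : HasFDerivAt f ℓ y) (hg : HasFDerivAt g (g' y) y)
    (hg' : HasFDerivAt g' (0 : E →L[ℝ] E →L[ℝ] ℝ) y) (hg'y : g' y = 0) :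
    HasFDerivAt (fun z => f z • g' z + g z • ℓ) (0 : E →L[ℝ] E →L[ℝ] ℝ) y := by
  refine ((hf.smul hg').add (hg.smul (hasFDerivAt_const ℓ y))).congr_fderiv ?_
  simp [hg'y]

theorem hasFDerivAt_fderiv_inner_mul_eval_norm_add_eval_norm {Q : E → ℝ} {c v y : E}
    {p q : ℝ[X]} {r : ℝ}
    (hQ : ∀ z, z ≠ c → Q z = ⟪v, z - c⟫ * p.eval ‖z - c‖ + q.eval ‖z - c‖)
    (hr : 0 < r) (hy : ‖y - c‖ = r)
    (hp' : p.derivative.eval r = 0) (hp'' : p.derivative.derivative.eval r = 0)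
    (hq' : q.derivative.eval r = 2 * r) (hq'' : q.derivative.derivative.eval r = 2) :
    DifferentiableAt ℝ Q y ∧ HasFDerivAt (fderiv ℝ Q) ((2 : ℝ) • innerSL ℝ) y := by
  subst hy
  have hyc : y ≠ c := sub_ne_zero.mp (norm_pos_iff.mp hr)
  set Dp : E → E →L[ℝ] ℝ := fun z => (p.derivative.eval ‖z - c‖ / ‖z - c‖) • innerSL ℝ (z - c)
  set Dq : E → E →L[ℝ] ℝ := fun z => (q.derivative.eval ‖z - c‖ / ‖z - c‖) • innerSL ℝ (z - c)
  have hinner (z : E) : HasFDerivAt (fun z => ⟪v, z - c⟫) (innerSL ℝ v) z :=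
    (innerSL ℝ v).hasFDerivAt.comp z ((hasFDerivAt_id z).sub_const c)
  have hF (z : E) (hz : z ≠ c) :
      HasFDerivAt (fun z => ⟪v, z - c⟫ * p.eval ‖z - c‖ + q.eval ‖z - c‖)
        (⟪v, z - c⟫ • Dp z + p.eval ‖z - c‖ • innerSL ℝ v + Dq z) z :=
    ((hinner z).mul (p.hasFDerivAt_eval_norm_sub hz)).add (q.hasFDerivAt_eval_norm_sub hz)
  have hQF (z : E) (hz : z ≠ c) :
      Q =ᶠ[nhds z] fun z => ⟪v, z - c⟫ * p.eval ‖z - c‖ + q.eval ‖z - c‖ :=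
    Filter.eventuallyEq_of_mem (isOpen_compl_singleton.mem_nhds hz) hQ
  have hfderiv : fderiv ℝ Q =ᶠ[nhds y]
      fun z => ⟪v, z - c⟫ • Dp z + p.eval ‖z - c‖ • innerSL ℝ v + Dq z :=
    Filter.eventuallyEq_of_mem (isOpen_compl_singleton.mem_nhds hyc) fun z hz =>
      (hQF z hz).fderiv_eq.trans (hF z hz).fderiv
  have hDp : HasFDerivAt Dp (0 : E →L[ℝ] E →L[ℝ] ℝ) y :=
    (p.hasFDerivAt_derivative_eval_norm_sub_div_smul hyc (by simp [hp', hp''])).congr_fderiv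
      (by ext; simp [hp'])
  have hDq : HasFDerivAt Dq ((2 : ℝ) • innerSL ℝ : E →L[ℝ] E →L[ℝ] ℝ) y :=
    (q.hasFDerivAt_derivative_eval_norm_sub_div_smul hyc
      (by rw [hq', hq'', mul_div_cancel_right₀ _ hr.ne'])).congr_fderiv
      (by rw [hq', mul_div_cancel_right₀ _ hr.ne'])
  have hD := (hasFDerivAt_smul_add_smul_zero (hinner y) (p.hasFDerivAt_eval_norm_sub hyc) hDp
    (by simp [Dp, hp'])).add hDq
  refine ⟨(hF y hyc).differentiableAt.congr_of_eventuallyEq (hQF y hyc), ?_⟩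
  simpa using hD.congr_of_eventuallyEq hfderiv

end InnerProductSpace

section QuinticProfiles

noncomputable def quinticLinearProfile (ρ : ℝ) : ℝ[X] :=
  C (-6 / ρ ^ 4) * X ^ 4 + C (16 / ρ ^ 3) * X ^ 3 + C (-12 / ρ ^ 2) * X ^ 2

noncomputable def quinticRadialProfile (ρ A δ f : ℝ) : ℝ[X] :=
  C (6 * A / ρ ^ 5 + 1 / ρ ^ 3 * (1 - δ / 2)) * X ^ 5
    + C (-15 * A / ρ ^ 4 - 3 / ρ ^ 2 * (1 - δ / 2)) * X ^ 4
    + C (10 * A / ρ ^ 3 + 3 / ρ * (1 - δ / 2)) * X ^ 3 + C (δ / 2) * X ^ 2 + C f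

variable {ρ : ℝ} (hρ : ρ ≠ 0)
include hρ

theorem quinticLinearProfile_derivative_eval_self :
    (quinticLinearProfile ρ).derivative.eval ρ = 0 ∧
      (quinticLinearProfile ρ).derivative.derivative.eval ρ = 0 := by
  constructor <;>
  · simp only [quinticLinearProfile, derivative_add, derivative_mul, derivative_C,
      derivative_X_pow, eval_add, eval_mul, eval_C, eval_pow, eval_X]
    field_simp
    norm_num
    ring

theorem quinticRadialProfile_derivative_eval_self (A δ f : ℝ) :
    (quinticRadialProfile ρ A δ f).derivative.eval ρ = 2 * ρ ∧
      (quinticRadialProfile ρ A δ f).derivative.derivative.eval ρ = 2 := by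
  constructor <;>
  · simp only [quinticRadialProfile, derivative_add, derivative_mul, derivative_C,
      derivative_X_pow, eval_add, eval_mul, eval_C, eval_pow, eval_X]
    field_simp
    norm_num
    ring

theorem quintic_eq_inner_mul_eval_add_eval {E : Type*} [NormedAddCommGroup E]
    [InnerProductSpace ℝ E] (A δ f : ℝ) (v : E) {y : E} (hy : y ≠ 0) :
    (-6 / ρ ^ 4 * ⟪y, v⟫ / ‖y‖ + 6 * A / ρ ^ 5 + 1 / ρ ^ 3 * (1 - δ / 2)) * ‖y‖ ^ 5
        + (16 / ρ ^ 3 * ⟪y, v⟫ / ‖y‖ - 15 * A / ρ ^ 4 - 3 / ρ ^ 2 * (1 - δ / 2)) * ‖y‖ ^ 4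
        + (-12 / ρ ^ 2 * ⟪y, v⟫ / ‖y‖ + 10 * A / ρ ^ 3 + 3 / ρ * (1 - δ / 2)) * ‖y‖ ^ 3
        + δ / 2 * ‖y‖ ^ 2 + f
      = ⟪v, y⟫ * (quinticLinearProfile ρ).eval ‖y‖ + (quinticRadialProfile ρ A δ f).eval ‖y‖ := by
  have : ‖y‖ ≠ 0 := norm_ne_zero_iff.mpr hy
  simp only [quinticLinearProfile, quinticRadialProfile, eval_add, eval_mul, eval_C, eval_pow,
    eval_X, real_inner_comm y v]
  field_simp
  ring

end QuinticProfiles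

theorem quintic_boundary_hessian_general
    {N : ℕ}
    (T : EuclideanSpace ℝ (Fin N))
    (Mi : EuclideanSpace ℝ (Fin N))
    (ρi : ℝ) (hρ : 0 < ρi) (fi : ℝ) (δ : ℝ)
    (A : ℝ)
    (Q : EuclideanSpace ℝ (Fin N) → ℝ)
    (hQ : ∀ x, x ≠ Mi → Q x =
      (-6 / ρi ^ 4 * ⟪x - Mi, T - Mi⟫ / ‖x - Mi‖ + 6 * A / ρi ^ 5
          + 1 / ρi ^ 3 * (1 - δ / 2)) * ‖x - Mi‖ ^ 5
        + (16 / ρi ^ 3 * ⟪x - Mi, T - Mi⟫ / ‖x - Mi‖ - 15 * A / ρi ^ 4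
          - 3 / ρi ^ 2 * (1 - δ / 2)) * ‖x - Mi‖ ^ 4
        + (-12 / ρi ^ 2 * ⟪x - Mi, T - Mi⟫ / ‖x - Mi‖ + 10 * A / ρi ^ 3
          + 3 / ρi * (1 - δ / 2)) * ‖x - Mi‖ ^ 3
        + δ / 2 * ‖x - Mi‖ ^ 2 + fi) :
    ∀ x : EuclideanSpace ℝ (Fin N), ‖x - Mi‖ = ρi →
      DifferentiableAt ℝ Q x ∧
      ∃ H : EuclideanSpace ℝ (Fin N) →L[ℝ] EuclideanSpace ℝ (Fin N) →L[ℝ] ℝ,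
        HasFDerivAt (fderiv ℝ Q) H x ∧
        ∀ j k : Fin N,
          H (EuclideanSpace.single j (1 : ℝ)) (EuclideanSpace.single k (1 : ℝ)) =
            if j = k then 2 else 0 := by
  intro x hx
  obtain ⟨hp', hp''⟩ := quinticLinearProfile_derivative_eval_self hρ.ne'
  obtain ⟨hq', hq''⟩ := quinticRadialProfile_derivative_eval_self hρ.ne' A δ fi
  obtain ⟨hdiff, hH⟩ := hasFDerivAt_fderiv_inner_mul_eval_norm_add_eval_norm
    (fun z hz => (hQ z hz).trans
      (quintic_eq_inner_mul_eval_add_eval hρ.ne' A δ fi (T - Mi) (sub_ne_zero.mpr hz)))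
    hρ hx hp' hp'' hq' hq''
  refine ⟨hdiff, _, hH, fun j k => ?_⟩
  change 2 * ⟪EuclideanSpace.single j (1 : ℝ), EuclideanSpace.single k 1⟫ = _
  rw [EuclideanSpace.inner_single_left]
  split_ifs with hjk <;> simp [hjk]

/-- The second derivative of the quintic modification agrees with that of the
paraboloid on the boundary sphere: for every `δ > 0` and every `x` with `‖x - Mi‖ = ρi`,
`Q` is twice differentiable at `x`, and its second-order partial derivatives there are
`∂²Q/∂x_j∂x_k (x) = 2` if `j = k` and `0` otherwise (Hessian `= 2·Id`, that of the
paraboloid `g(x) = ‖x - T‖² + t`). -/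
theorem quintic_boundary_hessian
    {N : ℕ} (hN : 1 ≤ N)
    (T : EuclideanSpace ℝ (Fin N)) (t : ℝ)
    (Mi : EuclideanSpace ℝ (Fin N)) (hMT : Mi ≠ T)
    (ρi : ℝ) (hρ : 0 < ρi) (fi : ℝ) (δ : ℝ) (hδ : 0 < δ)
    (A : ℝ) (hA : A = ‖T - Mi‖ ^ 2 + t - fi)
    (Q : EuclideanSpace ℝ (Fin N) → ℝ)
    (hQ : ∀ x, x ≠ Mi → Q x =
      (-6 / ρi ^ 4 * ⟪x - Mi, T - Mi⟫ / ‖x - Mi‖ + 6 * A / ρi ^ 5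
          + 1 / ρi ^ 3 * (1 - δ / 2)) * ‖x - Mi‖ ^ 5
        + (16 / ρi ^ 3 * ⟪x - Mi, T - Mi⟫ / ‖x - Mi‖ - 15 * A / ρi ^ 4
          - 3 / ρi ^ 2 * (1 - δ / 2)) * ‖x - Mi‖ ^ 4
        + (-12 / ρi ^ 2 * ⟪x - Mi, T - Mi⟫ / ‖x - Mi‖ + 10 * A / ρi ^ 3
          + 3 / ρi * (1 - δ / 2)) * ‖x - Mi‖ ^ 3
        + δ / 2 * ‖x - Mi‖ ^ 2 + fi) :
    ∀ x : EuclideanSpace ℝ (Fin N), ‖x - Mi‖ = ρi →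
      DifferentiableAt ℝ Q x ∧
      ∃ H : EuclideanSpace ℝ (Fin N) →L[ℝ] EuclideanSpace ℝ (Fin N) →L[ℝ] ℝ,
        HasFDerivAt (fderiv ℝ Q) H x ∧
        ∀ j k : Fin N,
          H (EuclideanSpace.single j (1 : ℝ)) (EuclideanSpace.single k (1 : ℝ)) =
            if j = k then 2 else 0 :=
  quintic_boundary_hessian_general T Mi ρi hρ fi δ A Q hQ
end

section
/- If f_i < (‖T − M_i‖ − ρ_i)² + t, then M_i is the strict global minimizer of the quadratic modification P_i on the ball S_i: for every x with 0 < ‖x − M_i‖ ≤ ρ_i one has P_i(x) > f_i; in fact P_i(x) − f_i ≥ ‖x − M_i‖² · ((‖T − M_i‖ − ρ_i)² + t − f_i)/ρ_i². -/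
open scoped RealInnerProductSpace

/-- Cauchy–Schwarz gives `⟪v, w⟫ / ‖v‖ ≤ ‖w‖`, and `1 - 2‖w‖/ρ + ‖w‖²/ρ² = (‖w‖ - ρ)²/ρ²`. -/
theorem quadratic_modification_lower_bound {E : Type*} [NormedAddCommGroup E]
    [InnerProductSpace ℝ E] {ρ : ℝ} (hρ : 0 < ρ) (s : ℝ) (v w : E) :
    ‖v‖ ^ 2 * ((‖w‖ - ρ) ^ 2 + s) / ρ ^ 2 ≤
      (1 - 2 / ρ * ⟪v, w⟫ / ‖v‖ + (‖w‖ ^ 2 + s) / ρ ^ 2) * ‖v‖ ^ 2 := by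
  rcases eq_or_ne ‖v‖ 0 with hv | hv
  · simp [hv]
  calc ‖v‖ ^ 2 * ((‖w‖ - ρ) ^ 2 + s) / ρ ^ 2
      = ‖v‖ ^ 2 + (‖w‖ ^ 2 + s) / ρ ^ 2 * ‖v‖ ^ 2 - 2 / ρ * ‖v‖ * (‖v‖ * ‖w‖) := by
        field_simp; ring
    _ ≤ ‖v‖ ^ 2 + (‖w‖ ^ 2 + s) / ρ ^ 2 * ‖v‖ ^ 2 - 2 / ρ * ‖v‖ * ⟪v, w⟫ := by
        gcongr; exact real_inner_le_norm v w
    _ = (1 - 2 / ρ * ⟪v, w⟫ / ‖v‖ + (‖w‖ ^ 2 + s) / ρ ^ 2) * ‖v‖ ^ 2 := by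
        field_simp; ring

theorem quadratic_strict_min_on_ball_general
    {N : ℕ}
    (T : EuclideanSpace ℝ (Fin N)) (t : ℝ)
    (Mi : EuclideanSpace ℝ (Fin N))
    (ρi : ℝ) (hρ : 0 < ρi) (fi : ℝ)
    (A : ℝ) (hA : A = ‖T - Mi‖ ^ 2 + t - fi)
    (P : EuclideanSpace ℝ (Fin N) → ℝ)
    (hP : ∀ x, x ≠ Mi → P x =
      (1 - 2 / ρi * ⟪x - Mi, T - Mi⟫ / ‖x - Mi‖ + A / ρi ^ 2) * ‖x - Mi‖ ^ 2 + fi)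
    (hfi : fi < (‖T - Mi‖ - ρi) ^ 2 + t) :
    ∀ x : EuclideanSpace ℝ (Fin N), 0 < ‖x - Mi‖ → ‖x - Mi‖ ≤ ρi →
      P x > fi ∧
      P x - fi ≥ ‖x - Mi‖ ^ 2 * ((‖T - Mi‖ - ρi) ^ 2 + t - fi) / ρi ^ 2 := by
  intro x hx _
  have hxM : x ≠ Mi := by rintro rfl; simp at hx
  have hbound : P x - fi ≥ ‖x - Mi‖ ^ 2 * ((‖T - Mi‖ - ρi) ^ 2 + t - fi) / ρi ^ 2 := by
    rw [hP x hxM, add_sub_cancel_right, hA]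
    simpa only [add_sub_assoc] using
      quadratic_modification_lower_bound hρ (t - fi) (x - Mi) (T - Mi)
  have hpos : 0 < ‖x - Mi‖ ^ 2 * ((‖T - Mi‖ - ρi) ^ 2 + t - fi) / ρi ^ 2 := by
    have : 0 < (‖T - Mi‖ - ρi) ^ 2 + t - fi := by linarith
    positivity
  exact ⟨by linarith, hbound⟩

/-- If `fi < (‖T - Mi‖ - ρi)² + t`, then `Mi` is the strict global minimizer
of the quadratic modification `P` on the ball `S_i`: for every `x` with
`0 < ‖x - Mi‖ ≤ ρi` one has `P x > fi`, and in fact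
`P x - fi ≥ ‖x - Mi‖² · ((‖T - Mi‖ - ρi)² + t - fi) / ρi²`. -/
theorem quadratic_strict_min_on_ball
    {N : ℕ} (hN : 1 ≤ N)
    (T : EuclideanSpace ℝ (Fin N)) (t : ℝ)
    (Mi : EuclideanSpace ℝ (Fin N)) (hMT : Mi ≠ T)
    (ρi : ℝ) (hρ : 0 < ρi) (fi : ℝ)
    (A : ℝ) (hA : A = ‖T - Mi‖ ^ 2 + t - fi)
    (P : EuclideanSpace ℝ (Fin N) → ℝ)
    (hP : ∀ x, x ≠ Mi → P x =
      (1 - 2 / ρi * ⟪x - Mi, T - Mi⟫ / ‖x - Mi‖ + A / ρi ^ 2) * ‖x - Mi‖ ^ 2 + fi)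
    (hfi : fi < (‖T - Mi‖ - ρi) ^ 2 + t) :
    ∀ x : EuclideanSpace ℝ (Fin N), 0 < ‖x - Mi‖ → ‖x - Mi‖ ≤ ρi →
      P x > fi ∧
      P x - fi ≥ ‖x - Mi‖ ^ 2 * ((‖T - Mi‖ - ρi) ^ 2 + t - fi) / ρi ^ 2 :=
  quadratic_strict_min_on_ball_general T t Mi ρi hρ fi A hA P hP hfi
end

section
/- The ND-type test function attains its global minimum value f* at the designated global minimizer: assume the balls S_i are pairwise disjoint, f_2 = f* with f* < t, and for every i ∈ {2,…,m} one has f_i ≥ f* and f_i < (‖T − M_i‖ − ρ_i)² + t. Then the ND-type function f satisfies f(x) ≥ f* for all x ∈ ℝ^N, and f(M_2) = f*. -/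
/-!
By Cauchy–Schwarz, `⟪x - Mᵢ, T - Mᵢ⟫ / ‖x - Mᵢ‖ ≤ ‖T - Mᵢ‖`, so the coefficient of `‖x - Mᵢ‖²`
in `Pᵢ` is at least `((‖T - Mᵢ‖ - ρᵢ)² + t - fᵢ) / ρᵢ²`, which is positive. Hence `Pᵢ ≥ fᵢ ≥ f*`
on each ball, while outside the balls `f = g ≥ t > f*`.
-/

open scoped RealInnerProductSpace

section QuadraticModification

variable {E : Type*} [NormedAddCommGroup E] [InnerProductSpace ℝ E]

theorem real_inner_div_norm_le_norm (v w : E) : ⟪v, w⟫ / ‖v‖ ≤ ‖w‖ :=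
  div_le_of_le_mul₀ (norm_nonneg v) (norm_nonneg w) (by rw [mul_comm]; exact real_inner_le_norm v w)

theorem quadraticModification_coeff_nonneg (v w : E) {ρ a : ℝ} (hρ : 0 < ρ)
    (ha : ‖w‖ ^ 2 ≤ (‖w‖ - ρ) ^ 2 + a) :
    0 ≤ 1 - 2 / ρ * ⟪v, w⟫ / ‖v‖ + a / ρ ^ 2 :=
  calc 0 ≤ ((‖w‖ - ρ) ^ 2 + a - ‖w‖ ^ 2) / ρ ^ 2 := div_nonneg (by linarith) (sq_nonneg ρ)
    _ = 1 - 2 / ρ * ‖w‖ + a / ρ ^ 2 := by field_simp; ring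
    _ ≤ 1 - 2 / ρ * ⟪v, w⟫ / ‖v‖ + a / ρ ^ 2 := by
      rw [mul_div_assoc]
      gcongr
      exact real_inner_div_norm_le_norm v w

end QuadraticModification

theorem ndtype_global_minimum_general
    {N : ℕ} (m : ℕ) (hm : 2 ≤ m)
    (T : EuclideanSpace ℝ (Fin N)) (t : ℝ) (fstar : ℝ)
    (M : ℕ → EuclideanSpace ℝ (Fin N)) (ρ : ℕ → ℝ) (fv : ℕ → ℝ)
    (hρ : ∀ i ∈ Finset.Icc 2 m, 0 < ρ i)
    (A : ℕ → ℝ) (hA : ∀ i ∈ Finset.Icc 2 m, A i = ‖T - M i‖ ^ 2 + t - fv i)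
    (P : ℕ → EuclideanSpace ℝ (Fin N) → ℝ)
    (hP : ∀ i ∈ Finset.Icc 2 m, ∀ x, x ≠ M i → P i x =
      (1 - 2 / (ρ i) * ⟪x - M i, T - M i⟫ / ‖x - M i‖ + A i / (ρ i) ^ 2)
          * ‖x - M i‖ ^ 2 + fv i)
    (hPM : ∀ i ∈ Finset.Icc 2 m, P i (M i) = fv i)
    (f : EuclideanSpace ℝ (Fin N) → ℝ)
    (hf1 : ∀ i ∈ Finset.Icc 2 m, ∀ x ∈ Metric.closedBall (M i) (ρ i), f x = P i x)
    (hf2 : ∀ x, (∀ i ∈ Finset.Icc 2 m, x ∉ Metric.closedBall (M i) (ρ i)) →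
      f x = ‖x - T‖ ^ 2 + t)
    (hf2star : fv 2 = fstar) (hstar : fstar < t)
    (hge : ∀ i ∈ Finset.Icc 2 m, fstar ≤ fv i)
    (hlt : ∀ i ∈ Finset.Icc 2 m, fv i < (‖T - M i‖ - ρ i) ^ 2 + t) :
    (∀ x : EuclideanSpace ℝ (Fin N), fstar ≤ f x) ∧ f (M 2) = fstar := by
  refine ⟨fun x => ?_, ?_⟩
  · by_cases hball : ∃ i ∈ Finset.Icc 2 m, x ∈ Metric.closedBall (M i) (ρ i)
    · obtain ⟨i, hi, hxi⟩ := hball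
      rw [hf1 i hi x hxi]
      refine (hge i hi).trans ?_
      rcases eq_or_ne x (M i) with rfl | hx
      · rw [hPM i hi]
      · have hcoeff := quadraticModification_coeff_nonneg (x - M i) (T - M i) (hρ i hi)
          (a := A i) (by rw [hA i hi]; linarith [hlt i hi])
        rw [hP i hi x hx]
        exact le_add_of_nonneg_left (mul_nonneg hcoeff (sq_nonneg _))
    · push Not at hball
      rw [hf2 x hball]
      linarith [sq_nonneg ‖x - T‖]
  · have h2 : 2 ∈ Finset.Icc 2 m := Finset.mem_Icc.mpr ⟨le_rfl, hm⟩
    rw [hf1 2 h2 (M 2) (Metric.mem_closedBall_self (hρ 2 h2).le), hPM 2 h2, hf2star]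

/-- The ND-type test function attains its global minimum value `f*` at the
designated global minimizer `M 2`: if the balls are pairwise disjoint, `fv 2 = f* < t`,
and for every `i ∈ {2,…,m}` one has `fv i ≥ f*` and `fv i < (‖T - M i‖ - ρ i)² + t`,
then `f x ≥ f*` for all `x` and `f (M 2) = f*`. -/
theorem ndtype_global_minimum
    {N : ℕ} (hN : 1 ≤ N) (m : ℕ) (hm : 2 ≤ m)
    (T : EuclideanSpace ℝ (Fin N)) (t : ℝ) (fstar : ℝ)
    (M : ℕ → EuclideanSpace ℝ (Fin N)) (ρ : ℕ → ℝ) (fv : ℕ → ℝ)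
    (hρ : ∀ i ∈ Finset.Icc 2 m, 0 < ρ i)
    (hMT : ∀ i ∈ Finset.Icc 2 m, M i ≠ T)
    (hMM : ∀ i ∈ Finset.Icc 2 m, ∀ j ∈ Finset.Icc 2 m, i ≠ j → M i ≠ M j)
    (hdisj : ∀ i ∈ Finset.Icc 2 m, ∀ j ∈ Finset.Icc 2 m, i ≠ j →
      Disjoint (Metric.closedBall (M i) (ρ i)) (Metric.closedBall (M j) (ρ j)))
    (A : ℕ → ℝ) (hA : ∀ i ∈ Finset.Icc 2 m, A i = ‖T - M i‖ ^ 2 + t - fv i)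
    (P : ℕ → EuclideanSpace ℝ (Fin N) → ℝ)
    (hP : ∀ i ∈ Finset.Icc 2 m, ∀ x, x ≠ M i → P i x =
      (1 - 2 / (ρ i) * ⟪x - M i, T - M i⟫ / ‖x - M i‖ + A i / (ρ i) ^ 2)
          * ‖x - M i‖ ^ 2 + fv i)
    (hPM : ∀ i ∈ Finset.Icc 2 m, P i (M i) = fv i)
    (f : EuclideanSpace ℝ (Fin N) → ℝ)
    (hf1 : ∀ i ∈ Finset.Icc 2 m, ∀ x ∈ Metric.closedBall (M i) (ρ i), f x = P i x)
    (hf2 : ∀ x, (∀ i ∈ Finset.Icc 2 m, x ∉ Metric.closedBall (M i) (ρ i)) →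
      f x = ‖x - T‖ ^ 2 + t)
    (hf2star : fv 2 = fstar) (hstar : fstar < t)
    (hge : ∀ i ∈ Finset.Icc 2 m, fstar ≤ fv i)
    (hlt : ∀ i ∈ Finset.Icc 2 m, fv i < (‖T - M i‖ - ρ i) ^ 2 + t) :
    (∀ x : EuclideanSpace ℝ (Fin N), fstar ≤ f x) ∧ f (M 2) = fstar :=
  ndtype_global_minimum_general m hm T t fstar M ρ fv hρ A hA P hP hPM f hf1 hf2 hf2star hstar hge
    hlt
end

section
/- Each point M_i is a strict local minimizer of the D-type test function with value f_i: if ρ_i < ‖T − M_i‖ and f_i < (‖T − M_i‖ − ρ_i)² + t, then there exists ε with 0 < ε ≤ ρ_i such that C_i(x) > f_i for every x with 0 < ‖x − M_i‖ < ε; since the D-type function equals C_i on S_i and takes the value f_i at M_i, M_i is a strict local minimizer of the D-type test function. -/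
open scoped RealInnerProductSpace

/-!
Write `r = ‖x - Mi‖`, `c = ⟪x - Mi, T - Mi⟫ / r` and `D = ‖T - Mi‖`. By Cauchy–Schwarz `|c| ≤ D`,
and bounding the two terms linear in `c` by their worst case gives
`C x - fi ≥ r² (δ - r K)` with `δ = 1 + 3A/ρ² - 4D/ρ` and `K = 2D/ρ² + 2A/ρ³`.
The hypothesis on `fi` says `A > D² - (D - ρ)²`, whence `ρ² δ > 2ρ (D - ρ) > 0`;
so `C x > fi` as soon as `0 < r` and `r K < δ`.
-/

lemma abs_inner_div_norm_le {E : Type*} [NormedAddCommGroup E] [InnerProductSpace ℝ E]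
    (v w : E) : |⟪v, w⟫ / ‖v‖| ≤ ‖w‖ := by
  rw [abs_div, abs_norm]
  rcases (norm_nonneg v).eq_or_lt with hv | hv
  · simp [← hv]
  · rw [div_le_iff₀ hv, mul_comm]
    exact abs_real_inner_le_norm v w

lemma exists_pos_le_forall_abs_lt_pos {g : ℝ → ℝ} (hg : ContinuousAt g 0) (h0 : 0 < g 0)
    {ρ : ℝ} (hρ : 0 < ρ) : ∃ ε, 0 < ε ∧ ε ≤ ρ ∧ ∀ r, |r| < ε → 0 < g r := by
  obtain ⟨ε, hε, hg⟩ := Metric.eventually_nhds_iff.mp (hg.eventually (lt_mem_nhds h0))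
  refine ⟨min ε ρ, lt_min hε hρ, min_le_right _ _, fun r hr => hg ?_⟩
  simpa [Real.dist_eq] using hr.trans_le (min_le_left _ _)

section Scalar

variable {ρ A D c r : ℝ}

lemma sq_mul_sub_le_cubic (hρ : 0 < ρ) (hc : |c| ≤ D) (hr : 0 ≤ r) :
    r ^ 2 * ((1 + 3 * A / ρ ^ 2 - 4 * D / ρ) - r * (2 * D / ρ ^ 2 + 2 * A / ρ ^ 3)) ≤
      (2 / ρ ^ 2 * c - 2 * A / ρ ^ 3) * r ^ 3 + (1 - 4 / ρ * c + 3 * A / ρ ^ 2) * r ^ 2 := by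
  obtain ⟨hc₁, hc₂⟩ := abs_le.mp hc
  have hgap : 0 ≤ 2 / ρ ^ 2 * (c + D) * r ^ 3 + 4 / ρ * (D - c) * r ^ 2 := by
    have : 0 ≤ c + D := by linarith
    have : 0 ≤ D - c := by linarith
    positivity
  linarith [show (2 / ρ ^ 2 * c - 2 * A / ρ ^ 3) * r ^ 3 + (1 - 4 / ρ * c + 3 * A / ρ ^ 2) * r ^ 2
      - r ^ 2 * ((1 + 3 * A / ρ ^ 2 - 4 * D / ρ) - r * (2 * D / ρ ^ 2 + 2 * A / ρ ^ 3))
      = 2 / ρ ^ 2 * (c + D) * r ^ 3 + 4 / ρ * (D - c) * r ^ 2 by ring]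

lemma cubic_quadratic_coeff_pos (hρ : 0 < ρ) (hρD : ρ < D) (hA : D ^ 2 - (D - ρ) ^ 2 < A) :
    0 < 1 + 3 * A / ρ ^ 2 - 4 * D / ρ := by
  have hnum : 0 < ρ ^ 2 + 3 * A - 4 * D * ρ := by nlinarith
  have : 1 + 3 * A / ρ ^ 2 - 4 * D / ρ = (ρ ^ 2 + 3 * A - 4 * D * ρ) / ρ ^ 2 := by
    field_simp
  rw [this]
  positivity

end Scalar

theorem cubic_strict_local_min_general
    {N : ℕ}
    (T : EuclideanSpace ℝ (Fin N)) (t : ℝ)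
    (Mi : EuclideanSpace ℝ (Fin N))
    (ρi : ℝ) (hρ : 0 < ρi) (fi : ℝ)
    (A : ℝ) (hA : A = ‖T - Mi‖ ^ 2 + t - fi)
    (C : EuclideanSpace ℝ (Fin N) → ℝ)
    (hC : ∀ x, x ≠ Mi → C x =
      (2 / ρi ^ 2 * ⟪x - Mi, T - Mi⟫ / ‖x - Mi‖ - 2 * A / ρi ^ 3) * ‖x - Mi‖ ^ 3
        + (1 - 4 / ρi * ⟪x - Mi, T - Mi⟫ / ‖x - Mi‖ + 3 * A / ρi ^ 2) * ‖x - Mi‖ ^ 2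
        + fi)
    (hρT : ρi < ‖T - Mi‖)
    (hfi : fi < (‖T - Mi‖ - ρi) ^ 2 + t) :
    ∃ ε : ℝ, 0 < ε ∧ ε ≤ ρi ∧
      ∀ x : EuclideanSpace ℝ (Fin N), 0 < ‖x - Mi‖ → ‖x - Mi‖ < ε → C x > fi := by
  have hδ := cubic_quadratic_coeff_pos (A := A) hρ hρT (by rw [hA]; linarith)
  obtain ⟨ε, hε, hερ, hpos⟩ := exists_pos_le_forall_abs_lt_pos
    (g := fun r =>
      (1 + 3 * A / ρi ^ 2 - 4 * ‖T - Mi‖ / ρi) - r * (2 * ‖T - Mi‖ / ρi ^ 2 + 2 * A / ρi ^ 3))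
    (by fun_prop) (by simpa using hδ) hρ
  refine ⟨ε, hε, hερ, fun x hr hrε => ?_⟩
  have hx : x ≠ Mi := sub_ne_zero.mp (norm_pos_iff.mp hr)
  have hbound := sq_mul_sub_le_cubic (A := A) hρ (abs_inner_div_norm_le (x - Mi) (T - Mi)) hr.le
  have hg := hpos ‖x - Mi‖ (by rwa [abs_norm])
  rw [hC x hx, mul_div_assoc (2 / ρi ^ 2), mul_div_assoc (4 / ρi)]
  linarith [mul_pos (pow_pos hr 2) hg]

/-- Each point `Mi` is a strict local minimizer of the D-type test function
with value `fi`: if `ρi < ‖T - Mi‖` and `fi < (‖T - Mi‖ - ρi)² + t`, then there exists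
`ε` with `0 < ε ≤ ρi` such that `C x > fi` for every `x` with `0 < ‖x - Mi‖ < ε`. -/
theorem cubic_strict_local_min
    {N : ℕ} (hN : 1 ≤ N)
    (T : EuclideanSpace ℝ (Fin N)) (t : ℝ)
    (Mi : EuclideanSpace ℝ (Fin N)) (hMT : Mi ≠ T)
    (ρi : ℝ) (hρ : 0 < ρi) (fi : ℝ)
    (A : ℝ) (hA : A = ‖T - Mi‖ ^ 2 + t - fi)
    (C : EuclideanSpace ℝ (Fin N) → ℝ)
    (hC : ∀ x, x ≠ Mi → C x =
      (2 / ρi ^ 2 * ⟪x - Mi, T - Mi⟫ / ‖x - Mi‖ - 2 * A / ρi ^ 3) * ‖x - Mi‖ ^ 3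
        + (1 - 4 / ρi * ⟪x - Mi, T - Mi⟫ / ‖x - Mi‖ + 3 * A / ρi ^ 2) * ‖x - Mi‖ ^ 2
        + fi)
    (hCM : C Mi = fi)
    (hρT : ρi < ‖T - Mi‖)
    (hfi : fi < (‖T - Mi‖ - ρi) ^ 2 + t) :
    ∃ ε : ℝ, 0 < ε ∧ ε ≤ ρi ∧
      ∀ x : EuclideanSpace ℝ (Fin N), 0 < ‖x - Mi‖ → ‖x - Mi‖ < ε → C x > fi :=
  cubic_strict_local_min_general T t Mi ρi hρ fi A hA C hC hρT hfi
end

section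
/- Near its minimizer the quintic modification is a quadratic of curvature δ up to third-order terms: there exist a constant K > 0 and a neighborhood U of M_i such that |Q_i(x) − f_i − (δ/2)‖x − M_i‖²| ≤ K‖x − M_i‖³ for all x ∈ U; in particular Q_i (extended by Q_i(M_i) = f_i) is differentiable at M_i with zero gradient and its Hessian at M_i equals δ·Id. -/
/-!
With `y = x - Mᵢ` and the denominator `‖y‖` cleared, `Q x - fᵢ - (δ/2)‖y‖²` is a combination of
`ℓ y ‖y‖ᵏ` (`k ≥ 2`, `ℓ = ⟪·, T - Mᵢ⟫`) and `‖y‖ᵏ` (`k ≥ 3`). Each of these is `O(‖y‖³)` with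
derivative `O(‖y‖²)`, so the remainder changes neither the gradient nor the Hessian at `Mᵢ`:
they are those of the quadratic `fᵢ + (δ/2)‖y‖²`.
-/

open scoped RealInnerProductSpace
open Asymptotics Filter Topology

theorem hasFDerivAt_zero_of_isBigO_norm_sub_pow {E F : Type*} [NormedAddCommGroup E]
    [NormedSpace ℝ E] [NormedAddCommGroup F] [NormedSpace ℝ F] {f : E → F} {x₀ : E} {n : ℕ}
    (h : f =O[𝓝 x₀] fun x => ‖x - x₀‖ ^ (n + 2)) : HasFDerivAt f (0 : E →L[ℝ] F) x₀ := by
  rw [hasFDerivAt_iff_isLittleO, h.eq_zero_of_norm_pow (by omega)]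
  simpa using h.trans_isLittleO (isLittleO_pow_sub_sub x₀ (by omega))

theorem isBigO_norm_pow_of_le {E : Type*} [NormedAddCommGroup E] {m n : ℕ} (h : m ≤ n) :
    (fun y : E => ‖y‖ ^ n) =O[𝓝 0] fun y => ‖y‖ ^ m := by
  rcases h.eq_or_lt with rfl | h
  · exact isBigO_refl _ _
  · exact (isLittleO_norm_pow_norm_pow h).isBigO

variable {E : Type*} [NormedAddCommGroup E] [InnerProductSpace ℝ E]

/-- The first-order trace of `g` having vanishing derivatives of all orders `≤ n` at `0`. -/
structure IsFlatOfOrder (n : ℕ) (g : E → ℝ) : Prop where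
  eventually_differentiableAt : ∀ᶠ y in 𝓝 0, DifferentiableAt ℝ g y
  isBigO : g =O[𝓝 0] fun y => ‖y‖ ^ (n + 1)
  isBigO_fderiv : fderiv ℝ g =O[𝓝 0] fun y => ‖y‖ ^ n

namespace IsFlatOfOrder

variable {n m : ℕ} {f g : E → ℝ}

theorem mono (hg : IsFlatOfOrder n g) (h : m ≤ n) : IsFlatOfOrder m g where
  eventually_differentiableAt := hg.eventually_differentiableAt
  isBigO := hg.isBigO.trans (isBigO_norm_pow_of_le (by omega))
  isBigO_fderiv := hg.isBigO_fderiv.trans (isBigO_norm_pow_of_le h)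

theorem add (hf : IsFlatOfOrder n f) (hg : IsFlatOfOrder n g) : IsFlatOfOrder n (f + g) where
  eventually_differentiableAt := by
    filter_upwards [hf.eventually_differentiableAt, hg.eventually_differentiableAt] with y hfy hgy
    exact hfy.add hgy
  isBigO := hf.isBigO.add hg.isBigO
  isBigO_fderiv := by
    refine (hf.isBigO_fderiv.add hg.isBigO_fderiv).congr' ?_ EventuallyEq.rfl
    filter_upwards [hf.eventually_differentiableAt, hg.eventually_differentiableAt] with y hfy hgy
    exact (fderiv_add hfy hgy).symm

theorem const_mul (hg : IsFlatOfOrder n g) (a : ℝ) : IsFlatOfOrder n fun y => a * g y where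
  eventually_differentiableAt := by
    filter_upwards [hg.eventually_differentiableAt] with y hy
    exact hy.const_mul a
  isBigO := hg.isBigO.const_mul_left a
  isBigO_fderiv := by
    refine (hg.isBigO_fderiv.const_smul_left a).congr' ?_ EventuallyEq.rfl
    filter_upwards [hg.eventually_differentiableAt] with y hy
    exact (fderiv_const_mul hy a).symm

theorem mul (hf : IsFlatOfOrder n f) (hg : IsFlatOfOrder m g) :
    IsFlatOfOrder (n + m + 1) (f * g) where
  eventually_differentiableAt := by
    filter_upwards [hf.eventually_differentiableAt, hg.eventually_differentiableAt] with y hfy hgy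
    exact hfy.mul hgy
  isBigO := by
    refine (hf.isBigO.mul hg.isBigO).congr_right fun y => ?_
    ring
  isBigO_fderiv := by
    have hfg : (fun y => f y • fderiv ℝ g y) =O[𝓝 0] fun y => ‖y‖ ^ (n + m + 1) :=
      (hf.isBigO.smul hg.isBigO_fderiv).congr_right fun y => by rw [smul_eq_mul]; ring
    have hgf : (fun y => g y • fderiv ℝ f y) =O[𝓝 0] fun y => ‖y‖ ^ (n + m + 1) :=
      (hg.isBigO.smul hf.isBigO_fderiv).congr_right fun y => by rw [smul_eq_mul]; ring
    refine (hfg.add hgf).congr' ?_ EventuallyEq.rfl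
    filter_upwards [hf.eventually_differentiableAt, hg.eventually_differentiableAt] with y hfy hgy
    exact (fderiv_mul hfy hgy).symm

end IsFlatOfOrder

theorem ContinuousLinearMap.isFlatOfOrder_zero (ℓ : E →L[ℝ] ℝ) : IsFlatOfOrder 0 ℓ where
  eventually_differentiableAt := Eventually.of_forall fun y => ℓ.differentiableAt
  isBigO := by simpa using (ℓ.isBigO_id (𝓝 0)).norm_right
  isBigO_fderiv := by simpa using isBigO_const_one ℝ ℓ (𝓝 (0 : E))

theorem hasFDerivAt_norm_pow (k : ℕ) (y : E) :
    HasFDerivAt (fun y : E => ‖y‖ ^ (k + 2)) (((k + 2 : ℝ) * ‖y‖ ^ k) • innerSL ℝ y) y := by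
  have h := hasFDerivAt_norm_rpow y (p := ((k + 2 : ℕ) : ℝ)) (by norm_cast; omega)
  simp only [Real.rpow_natCast] at h
  convert h using 3
  · push_cast; ring
  · rw [show ((k + 2 : ℕ) : ℝ) - 2 = k by push_cast; ring, Real.rpow_natCast]

theorem isFlatOfOrder_norm_pow (k : ℕ) : IsFlatOfOrder (k + 1) fun y : E => ‖y‖ ^ (k + 2) where
  eventually_differentiableAt :=
    Eventually.of_forall fun y => (hasFDerivAt_norm_pow k y).differentiableAt
  isBigO := by simpa using (isBigO_refl (fun y : E => ‖y‖ ^ (k + 2)) (𝓝 0)).norm_left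
  isBigO_fderiv := by
    refine IsBigO.of_bound (k + 2) (Eventually.of_forall fun y => ?_)
    rw [(hasFDerivAt_norm_pow k y).fderiv, norm_smul, innerSL_apply_norm]
    simp [pow_succ, mul_assoc, abs_of_nonneg (by positivity : (0 : ℝ) ≤ k + 2)]

noncomputable def quinticRemainder (ℓ : E →L[ℝ] ℝ) (b₄ a₅ b₃ a₄ b₂ a₃ : ℝ) (y : E) : ℝ :=
  b₄ * ℓ y * ‖y‖ ^ 4 + a₅ * ‖y‖ ^ 5 + b₃ * ℓ y * ‖y‖ ^ 3 + a₄ * ‖y‖ ^ 4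
    + b₂ * ℓ y * ‖y‖ ^ 2 + a₃ * ‖y‖ ^ 3

theorem isFlatOfOrder_two_quinticRemainder (ℓ : E →L[ℝ] ℝ) (b₄ a₅ b₃ a₄ b₂ a₃ : ℝ) :
    IsFlatOfOrder 2 (quinticRemainder ℓ b₄ a₅ b₃ a₄ b₂ a₃) := by
  have hℓ (b : ℝ) := ℓ.isFlatOfOrder_zero.const_mul b
  have hpow (k : ℕ) (a : ℝ) := (isFlatOfOrder_norm_pow (E := E) k).const_mul a
  exact (((((((hℓ b₄).mul (isFlatOfOrder_norm_pow 2)).mono (by norm_num)).add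
    ((hpow 3 a₅).mono (by norm_num))).add (((hℓ b₃).mul (isFlatOfOrder_norm_pow 1)).mono
    (by norm_num))).add ((hpow 2 a₄).mono (by norm_num))).add
    ((hℓ b₂).mul (isFlatOfOrder_norm_pow 0))).add (hpow 1 a₃)

section Taylor

variable {n : ℕ} {g Q : E → ℝ} {M : E} {f δ : ℝ}

theorem IsFlatOfOrder.exists_abs_sub_quadratic_le (hg : IsFlatOfOrder n g)
    (hQ : ∀ x, Q x = g (x - M) + δ / 2 * ‖x - M‖ ^ 2 + f) :
    ∃ K : ℝ, 0 < K ∧ ∃ U ∈ 𝓝 M, ∀ x ∈ U,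
      |Q x - f - δ / 2 * ‖x - M‖ ^ 2| ≤ K * ‖x - M‖ ^ (n + 1) := by
  obtain ⟨K, hK, hKg⟩ :=
    (hg.isBigO.comp_tendsto (tendsto_sub_nhds_zero_iff.2 tendsto_id)).exists_pos
  refine ⟨K, hK, _, hKg.bound, fun x hx => ?_⟩
  simpa [hQ x] using hx

theorem hasFDerivAt_of_eq_comp_sub_add_sq (hQ : ∀ x, Q x = g (x - M) + δ / 2 * ‖x - M‖ ^ 2 + f)
    {x : E} (hx : DifferentiableAt ℝ g (x - M)) :
    HasFDerivAt Q (fderiv ℝ g (x - M) + δ • innerSL ℝ (x - M)) x := by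
  have hsub := (hasFDerivAt_id (𝕜 := ℝ) x).sub_const M
  have h := ((hx.hasFDerivAt.comp x hsub).add (hsub.norm_sq.const_mul (δ / 2))).add_const f
  rw [show Q = _ from funext hQ]
  refine h.congr_fderiv ?_
  ext v
  simp only [ContinuousLinearMap.comp_id, id_eq, map_sub, add_apply,
    smul_apply, sub_apply, coe_innerSL_apply,
    nsmul_eq_mul, Nat.cast_ofNat, smul_eq_mul, add_right_inj]
  ring

theorem IsFlatOfOrder.hasGradientAt_zero [CompleteSpace E] (hg : IsFlatOfOrder (n + 1) g)
    (hQ : ∀ x, Q x = g (x - M) + δ / 2 * ‖x - M‖ ^ 2 + f) : HasGradientAt Q 0 M := by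
  have hg0 : fderiv ℝ g 0 = 0 :=
    IsBigO.eq_zero_of_norm_pow (by simpa using hg.isBigO_fderiv) (by omega)
  have h := hasFDerivAt_of_eq_comp_sub_add_sq (x := M) hQ
    (by simpa using hg.eventually_differentiableAt.self_of_nhds)
  simp only [sub_self, hg0, map_zero, smul_zero, add_zero] at h
  simpa using h.hasGradientAt

theorem IsFlatOfOrder.hasFDerivAt_fderiv (hg : IsFlatOfOrder (n + 2) g)
    (hQ : ∀ x, Q x = g (x - M) + δ / 2 * ‖x - M‖ ^ 2 + f) :
    HasFDerivAt (fderiv ℝ Q) (δ • innerSL ℝ) M := by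
  have hsub : Tendsto (fun x => x - M) (𝓝 M) (𝓝 0) := tendsto_sub_nhds_zero_iff.2 tendsto_id
  have hQ' : fderiv ℝ Q =ᶠ[𝓝 M] fun x => fderiv ℝ g (x - M) + δ • innerSL ℝ (x - M) := by
    filter_upwards [hsub.eventually hg.eventually_differentiableAt] with x hx
    exact (hasFDerivAt_of_eq_comp_sub_add_sq hQ hx).fderiv
  have hg' : HasFDerivAt (fun x => fderiv ℝ g (x - M)) 0 M :=
    hasFDerivAt_zero_of_isBigO_norm_sub_pow (hg.isBigO_fderiv.comp_tendsto hsub)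
  have hlin : HasFDerivAt (fun x => δ • innerSL ℝ (x - M)) (δ • innerSL ℝ) M :=
    (δ • innerSL ℝ (E := E)).hasFDerivAt.comp M ((hasFDerivAt_id M).sub_const M)
  simpa using (hg'.add hlin).congr_of_eventuallyEq hQ'

end Taylor

theorem quintic_taylor_at_minimizer_general
    {N : ℕ}
    (T : EuclideanSpace ℝ (Fin N))
    (Mi : EuclideanSpace ℝ (Fin N))
    (ρi : ℝ) (fi : ℝ) (δ : ℝ)
    (A : ℝ)
    (Q : EuclideanSpace ℝ (Fin N) → ℝ)
    (hQ : ∀ x, x ≠ Mi → Q x =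
      (-6 / ρi ^ 4 * ⟪x - Mi, T - Mi⟫ / ‖x - Mi‖ + 6 * A / ρi ^ 5
          + 1 / ρi ^ 3 * (1 - δ / 2)) * ‖x - Mi‖ ^ 5
        + (16 / ρi ^ 3 * ⟪x - Mi, T - Mi⟫ / ‖x - Mi‖ - 15 * A / ρi ^ 4
          - 3 / ρi ^ 2 * (1 - δ / 2)) * ‖x - Mi‖ ^ 4
        + (-12 / ρi ^ 2 * ⟪x - Mi, T - Mi⟫ / ‖x - Mi‖ + 10 * A / ρi ^ 3
          + 3 / ρi * (1 - δ / 2)) * ‖x - Mi‖ ^ 3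
        + δ / 2 * ‖x - Mi‖ ^ 2 + fi)
    (hQM : Q Mi = fi) :
    (∃ K : ℝ, 0 < K ∧ ∃ U ∈ nhds Mi, ∀ x ∈ U,
        |Q x - fi - δ / 2 * ‖x - Mi‖ ^ 2| ≤ K * ‖x - Mi‖ ^ 3) ∧
    HasGradientAt Q (0 : EuclideanSpace ℝ (Fin N)) Mi ∧
    ∃ H : EuclideanSpace ℝ (Fin N) →L[ℝ] EuclideanSpace ℝ (Fin N) →L[ℝ] ℝ,
      HasFDerivAt (fderiv ℝ Q) H Mi ∧
      ∀ u v : EuclideanSpace ℝ (Fin N), H u v = δ * ⟪u, v⟫ := by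
  set R := quinticRemainder (innerSL ℝ (T - Mi)) (-6 / ρi ^ 4)
    (6 * A / ρi ^ 5 + 1 / ρi ^ 3 * (1 - δ / 2)) (16 / ρi ^ 3)
    (-(15 * A / ρi ^ 4) - 3 / ρi ^ 2 * (1 - δ / 2)) (-12 / ρi ^ 2)
    (10 * A / ρi ^ 3 + 3 / ρi * (1 - δ / 2)) with hR
  have hQR : ∀ x, Q x = R (x - Mi) + δ / 2 * ‖x - Mi‖ ^ 2 + fi := by
    intro x
    rcases eq_or_ne x Mi with rfl | hx
    · simp [hR, quinticRemainder, hQM]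
    · have hr : ‖x - Mi‖ ≠ 0 := norm_ne_zero_iff.2 (sub_ne_zero.2 hx)
      rw [hQ x hx, hR, quinticRemainder, innerSL_apply_apply, real_inner_comm]
      field_simp
      ring
  have hRflat : IsFlatOfOrder 2 R := isFlatOfOrder_two_quinticRemainder _ _ _ _ _ _ _
  exact ⟨hRflat.exists_abs_sub_quadratic_le hQR, hRflat.hasGradientAt_zero hQR,
    δ • innerSL ℝ, hRflat.hasFDerivAt_fderiv hQR, fun u v => rfl⟩

/-- Near its minimizer the quintic modification is a quadratic of curvature
`δ` up to third-order terms: there are `K > 0` and a neighborhood `U` of `Mi` with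
`|Q x - fi - (δ/2)‖x - Mi‖²| ≤ K‖x - Mi‖³` on `U`; in particular `Q` is differentiable
at `Mi` with zero gradient and its Hessian at `Mi` is `δ·Id`. -/
theorem quintic_taylor_at_minimizer
    {N : ℕ} (hN : 1 ≤ N)
    (T : EuclideanSpace ℝ (Fin N)) (t : ℝ)
    (Mi : EuclideanSpace ℝ (Fin N)) (hMT : Mi ≠ T)
    (ρi : ℝ) (hρ : 0 < ρi) (fi : ℝ) (δ : ℝ) (hδ : 0 < δ)
    (A : ℝ) (hA : A = ‖T - Mi‖ ^ 2 + t - fi)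
    (Q : EuclideanSpace ℝ (Fin N) → ℝ)
    (hQ : ∀ x, x ≠ Mi → Q x =
      (-6 / ρi ^ 4 * ⟪x - Mi, T - Mi⟫ / ‖x - Mi‖ + 6 * A / ρi ^ 5
          + 1 / ρi ^ 3 * (1 - δ / 2)) * ‖x - Mi‖ ^ 5
        + (16 / ρi ^ 3 * ⟪x - Mi, T - Mi⟫ / ‖x - Mi‖ - 15 * A / ρi ^ 4
          - 3 / ρi ^ 2 * (1 - δ / 2)) * ‖x - Mi‖ ^ 4
        + (-12 / ρi ^ 2 * ⟪x - Mi, T - Mi⟫ / ‖x - Mi‖ + 10 * A / ρi ^ 3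
          + 3 / ρi * (1 - δ / 2)) * ‖x - Mi‖ ^ 3
        + δ / 2 * ‖x - Mi‖ ^ 2 + fi)
    (hQM : Q Mi = fi) :
    (∃ K : ℝ, 0 < K ∧ ∃ U ∈ nhds Mi, ∀ x ∈ U,
        |Q x - fi - δ / 2 * ‖x - Mi‖ ^ 2| ≤ K * ‖x - Mi‖ ^ 3) ∧
    HasGradientAt Q (0 : EuclideanSpace ℝ (Fin N)) Mi ∧
    ∃ H : EuclideanSpace ℝ (Fin N) →L[ℝ] EuclideanSpace ℝ (Fin N) →L[ℝ] ℝ,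
      HasFDerivAt (fderiv ℝ Q) H Mi ∧
      ∀ u v : EuclideanSpace ℝ (Fin N), H u v = δ * ⟪u, v⟫ :=
  quintic_taylor_at_minimizer_general T Mi ρi fi δ A Q hQ hQM
end

section
/- The sequential expansion of attraction radii preserves non-overlapping: let M_1, …, M_m (m ≥ 2) be pairwise distinct points of ℝ^N with d_{ij} = ‖M_i − M_j‖, and let ρ_1, …, ρ_m > 0 satisfy ρ_i + ρ_j ≤ d_{ij} for all i ≠ j. Define updated radii sequentially for i = 1, …, m in ascending order by ρ'_i = max(ρ_i, min_{j ≠ i} (d_{ij} − r_j)), where r_j = ρ'_j if j < i and r_j = ρ_j if j > i. Then ρ'_i ≥ ρ_i for all i, and ρ'_i + ρ'_j ≤ d_{ij} for all i ≠ j, so the expanded open balls {x : ‖x − M_i‖ < ρ'_i} remain pairwise disjoint. -/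
/-!
No induction over the sweep is needed. For `j < i`, the update of `i` already saw the
new radius `ρ' j`, so `ρ' i ≤ max (ρ i) (d i j - ρ' j)`; the update of `j` saw the old
radius `ρ i`, so `ρ' j ≤ max (ρ j) (d i j - ρ i)`. If the first maximum is `d i j - ρ' j`
we are done; otherwise `ρ' i ≤ ρ i`, and the second bound together with
`ρ i + ρ j ≤ d i j` gives `ρ' j ≤ d i j - ρ i`.
-/

section SequentialExpansion

variable {ι : Type*} [LinearOrder ι] [Finite ι] {d : ι → ι → ℝ} {ρ ρ' : ι → ℝ}

theorem expandedRadius_le_max_sub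
    (hρ' : ∀ i, ρ' i = max (ρ i) (⨅ j : {j // j ≠ i}, d i j - if (j : ι) < i then ρ' j else ρ j))
    {i j : ι} (hji : j ≠ i) :
    ρ' i ≤ max (ρ i) (d i j - if j < i then ρ' j else ρ j) := by
  rw [hρ' i]
  gcongr
  exact ciInf_le (Set.finite_range _).bddBelow (⟨j, hji⟩ : {j // j ≠ i})

theorem expandedRadius_add_le_of_lt
    (hsymm : ∀ i j, d i j = d j i) (hsep : ∀ i j, i ≠ j → ρ i + ρ j ≤ d i j)
    (hρ' : ∀ i, ρ' i = max (ρ i) (⨅ j : {j // j ≠ i}, d i j - if (j : ι) < i then ρ' j else ρ j))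
    {i j : ι} (hji : j < i) :
    ρ' i + ρ' j ≤ d i j := by
  have hi : ρ' i ≤ max (ρ i) (d i j - ρ' j) := by
    simpa [hji] using expandedRadius_le_max_sub hρ' hji.ne
  have hj : ρ' j ≤ max (ρ j) (d i j - ρ i) := by
    simpa [hji.not_gt, hsymm j i] using expandedRadius_le_max_sub hρ' hji.ne'
  have hsep_ij := hsep i j hji.ne'
  rcases le_max_iff.1 hi with hi | hi <;> rcases le_max_iff.1 hj with hj | hj <;> linarith

theorem expandedRadius_add_le
    (hsymm : ∀ i j, d i j = d j i) (hsep : ∀ i j, i ≠ j → ρ i + ρ j ≤ d i j)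
    (hρ' : ∀ i, ρ' i = max (ρ i) (⨅ j : {j // j ≠ i}, d i j - if (j : ι) < i then ρ' j else ρ j))
    {i j : ι} (hij : i ≠ j) :
    ρ' i + ρ' j ≤ d i j := by
  rcases hij.lt_or_gt with hij | hji
  · rw [add_comm, hsymm]
    exact expandedRadius_add_le_of_lt hsymm hsep hρ' hij
  · exact expandedRadius_add_le_of_lt hsymm hsep hρ' hji

end SequentialExpansion

theorem expanded_radii_disjoint_general
    {N : ℕ} (m : ℕ)
    (M : Fin m → EuclideanSpace ℝ (Fin N))
    (d : Fin m → Fin m → ℝ) (hd : ∀ i j, d i j = ‖M i - M j‖)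
    (ρ : Fin m → ℝ)
    (hsep : ∀ i j : Fin m, i ≠ j → ρ i + ρ j ≤ d i j)
    (ρ' : Fin m → ℝ)
    (hρ' : ∀ i : Fin m, ρ' i =
      max (ρ i)
        (⨅ j : {j : Fin m // j ≠ i},
          d i (j : Fin m) - (if (j : Fin m) < i then ρ' (j : Fin m) else ρ (j : Fin m)))) :
    (∀ i : Fin m, ρ i ≤ ρ' i) ∧
    (∀ i j : Fin m, i ≠ j → ρ' i + ρ' j ≤ d i j) ∧
    (∀ i j : Fin m, i ≠ j →
      Disjoint (Metric.ball (M i) (ρ' i)) (Metric.ball (M j) (ρ' j))) := by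
  have hsymm : ∀ i j, d i j = d j i := fun i j => by rw [hd, hd, norm_sub_rev]
  have hsep' : ∀ i j : Fin m, i ≠ j → ρ' i + ρ' j ≤ d i j :=
    fun i j hij => expandedRadius_add_le hsymm hsep hρ' hij
  refine ⟨fun i => hρ' i ▸ le_max_left _ _, hsep', fun i j hij => ?_⟩
  apply Metric.ball_disjoint_ball
  rw [dist_eq_norm, ← hd]
  exact hsep' i j hij

/-- The sequential expansion of attraction radii preserves
non-overlapping: if `ρ i + ρ j ≤ d i j = ‖M i - M j‖` for `i ≠ j`, and the updated radii
are defined sequentially (in ascending order of indices) by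
`ρ' i = max (ρ i) (min_{j ≠ i} (d i j - r j))` with `r j = ρ' j` for `j < i` and
`r j = ρ j` for `j > i`, then `ρ' i ≥ ρ i`, `ρ' i + ρ' j ≤ d i j` for `i ≠ j`, and the
expanded open balls remain pairwise disjoint. -/
theorem expanded_radii_disjoint
    {N : ℕ} (hN : 1 ≤ N) (m : ℕ) (hm : 2 ≤ m)
    (M : Fin m → EuclideanSpace ℝ (Fin N))
    (hMM : ∀ i j : Fin m, i ≠ j → M i ≠ M j)
    (d : Fin m → Fin m → ℝ) (hd : ∀ i j, d i j = ‖M i - M j‖)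
    (ρ : Fin m → ℝ) (hρpos : ∀ i, 0 < ρ i)
    (hsep : ∀ i j : Fin m, i ≠ j → ρ i + ρ j ≤ d i j)
    (ρ' : Fin m → ℝ)
    (hρ' : ∀ i : Fin m, ρ' i =
      max (ρ i)
        (⨅ j : {j : Fin m // j ≠ i},
          d i (j : Fin m) - (if (j : Fin m) < i then ρ' (j : Fin m) else ρ (j : Fin m)))) :
    (∀ i : Fin m, ρ i ≤ ρ' i) ∧
    (∀ i j : Fin m, i ≠ j → ρ' i + ρ' j ≤ d i j) ∧
    (∀ i j : Fin m, i ≠ j →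
      Disjoint (Metric.ball (M i) (ρ' i)) (Metric.ball (M j) (ρ' j))) :=
  expanded_radii_disjoint_general m M d hd ρ hsep ρ' hρ'
end
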